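/- arXiv:1503.06730 — 11 statements merged into one kernel-verified Lean document; each statement's English description precedes it below -/
import Mathlib

section
/- Fix nonnegative integers μ and r. Then for every integer i with 0 ≤ i ≤ r, one has binom(r,i) · ∑_{j=0}^{μ} binom(μ,j) · (j+r−i)! · (μ−j+i)! = (μ+r+1)! / (r+1). -/
/-!
Write `a = r - i` and `b = i`. Dividing the `j`-th term by `a! b! μ!` leaves
`C(a + j, a) · C(b + μ - j, b)`, the product of the `X^j` and `X^(μ-j)` coefficients of
`(1 - X)^-(a+1)` and `(1 - X)^-(b+1)`. Hence the sum is the `X^μ` coefficient of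
`(1 - X)^-(a+b+2)`, i.e. `C(μ + a + b + 1, a + b + 1)`, and the factorials recombine to
`(μ + r + 1)! / (r + 1)` once multiplied by `C(r, i) = r! / (a! b!)`.
-/

open Finset PowerSeries Nat

namespace Nat

theorem sum_antidiagonal_add_choose_mul_add_choose (a b n : ℕ) :
    ∑ ij ∈ antidiagonal n, (a + ij.1).choose a * (b + ij.2).choose b =
      (a + b + 1 + n).choose (a + b + 1) := by
  have h := congrArg (fun f => coeff n f.val) (invOneSubPow_add ℤ (a + 1) (b + 1))
  rw [show a + 1 + (b + 1) = a + b + 1 + 1 by ring] at h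
  simp only [Units.val_mul, invOneSubPow_val_succ_eq_mk_add_choose, coeff_mul, coeff_mk] at h
  exact_mod_cast h.symm

theorem factorial_mul_sum_range_choose_mul_factorial_mul_factorial (μ a b : ℕ) :
    (a + b + 1)! * ∑ j ∈ range (μ + 1), μ.choose j * (j + a)! * (μ - j + b)! =
      a ! * b ! * (μ + a + b + 1)! := by
  have hterm : ∀ j ∈ range (μ + 1), μ.choose j * (j + a)! * (μ - j + b)! =
      a ! * b ! * μ ! * ((a + j).choose a * (b + (μ - j)).choose b) := by
    intro j hj
    rw [add_comm a, add_comm b, ← add_choose_mul_factorial_mul_factorial j a,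
      ← add_choose_mul_factorial_mul_factorial (μ - j) b,
      ← choose_mul_factorial_mul_factorial (mem_range_succ_iff.mp hj)]
    ring
  rw [sum_congr rfl hterm, ← mul_sum,
    ← Finset.Nat.sum_antidiagonal_eq_sum_range_succ_mk
      (fun ij => (a + ij.1).choose a * (b + ij.2).choose b),
    sum_antidiagonal_add_choose_mul_add_choose, add_comm (a + b + 1) μ,
    show μ + a + b + 1 = μ + (a + b + 1) by ring,
    ← add_choose_mul_factorial_mul_factorial μ (a + b + 1)]
  ring

end Nat

/-- Lemma 3.1 (combinatorial lemma): for `0 ≤ i ≤ r`,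
`C(r,i) · ∑_{j=0}^{μ} C(μ,j) (j+r−i)! (μ−j+i)! = (μ+r+1)!/(r+1)`. -/
theorem stmt_0 (μ r i : ℕ) (hi : i ≤ r) :
    (r.choose i : ℚ) *
      ∑ j ∈ Finset.range (μ + 1),
        (μ.choose j : ℚ) * (j + (r - i)).factorial * ((μ - j) + i).factorial
    = ((μ + r + 1).factorial : ℚ) / (r + 1) := by
  have hsum := factorial_mul_sum_range_choose_mul_factorial_mul_factorial μ (r - i) i
  rw [show r - i + i = r by omega, show μ + (r - i) + i = μ + r by omega, factorial_succ] at hsum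
  have hchoose := choose_mul_factorial_mul_factorial hi
  apply_fun ((↑) : ℕ → ℚ) at hsum hchoose
  push_cast at hsum hchoose
  rw [eq_div_iff (by positivity), ← mul_left_inj' (by positivity : (r ! : ℚ) ≠ 0)]
  linear_combination (r.choose i : ℚ) * hsum + ((μ + r + 1)! : ℚ) * hchoose
end

section
/- For every nonnegative integer l and every λ ∈ ℂ, the function z ↦ z^l · e^{πλz̄ − π|z|²} is integrable over ℂ and ∫_ℂ z^l e^{πλz̄ − π|z|²} dz = λ^l. -/
open MeasureTheory

namespace Stmt1Aux

open Complex Real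

noncomputable def f (k : ℕ) (lam mu : ℂ) (z : ℂ) : ℂ :=
  z ^ k * Complex.exp ((Real.pi : ℂ) * mu * z + (Real.pi : ℂ) * lam * (starRingEnd ℂ) z
      - (Real.pi : ℂ) * (‖z‖ : ℂ) ^ 2)

/-- Gaussian integrable on ℂ. -/
lemma gaussC : Integrable (fun z : ℂ => Real.exp (-(Real.pi/2) * ‖z‖ ^ 2)) := by
  have h : Integrable (fun p : ℝ × ℝ =>
      Real.exp (-(Real.pi/2) * p.1 ^ 2) * Real.exp (-(Real.pi/2) * p.2 ^ 2)) :=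
    (integrable_exp_neg_mul_sq (by positivity)).mul_prod (integrable_exp_neg_mul_sq (by positivity))
  have h2 := (Complex.volume_preserving_equiv_real_prod.integrable_comp_emb
    Complex.measurableEquivRealProd.measurableEmbedding).mpr h
  convert h2 using 2 with z
  · rfl
  simp only [Function.comp_apply, Complex.measurableEquivRealProd_apply]
  rw [← Real.exp_add, Complex.sq_norm, Complex.normSq_apply]
  ring_nf

lemma bound_integrable (k : ℕ) (c : ℝ) :
    Integrable (fun z : ℂ =>
      ‖z‖ ^ k * Real.exp (c * ‖z‖ - Real.pi * ‖z‖ ^ 2)) := by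
  refine (gaussC.const_mul ((Nat.factorial k : ℝ) * Real.exp ((c+1)^2 / (2 * Real.pi)))).mono'
    ?_ (Filter.Eventually.of_forall fun z => ?_)
  · apply Continuous.aestronglyMeasurable
    have habs : Continuous fun z : ℂ => ‖z‖ := continuous_norm
    fun_prop
  · rw [Real.norm_eq_abs, _root_.abs_of_nonneg (by positivity)]
    set r := ‖z‖ with hr
    have hr0 : 0 ≤ r := norm_nonneg z
    have h1 : r ^ k ≤ (Nat.factorial k : ℝ) * Real.exp r := by
      have h := Real.pow_div_factorial_le_exp r hr0 k
      rw [div_le_iff₀ (by positivity : (0:ℝ) < (Nat.factorial k : ℝ))] at h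
      linarith [h]
    calc r ^ k * Real.exp (c * r - Real.pi * r ^ 2)
        ≤ ((Nat.factorial k : ℝ) * Real.exp r) * Real.exp (c * r - Real.pi * r ^ 2) := by
          apply mul_le_mul_of_nonneg_right h1 (Real.exp_nonneg _)
      _ = (Nat.factorial k : ℝ) * Real.exp ((c + 1) * r - Real.pi * r ^ 2) := by
          rw [mul_assoc, ← Real.exp_add]; ring_nf
      _ ≤ (Nat.factorial k : ℝ) * (Real.exp ((c+1)^2 / (2 * Real.pi)) * Real.exp (-(Real.pi/2) * r ^ 2)) := by
          rw [← Real.exp_add]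
          apply mul_le_mul_of_nonneg_left _ (by positivity)
          apply Real.exp_le_exp.mpr
          have hπ := Real.pi_pos
          have key : (c + 1) * r - (Real.pi/2) * r ^ 2 ≤ (c+1)^2 / (2 * Real.pi) := by
            rw [le_div_iff₀ (by positivity)]
            nlinarith [sq_nonneg ((c+1) - Real.pi * r)]
          linarith
      _ = (Nat.factorial k : ℝ) * Real.exp ((c+1)^2 / (2 * Real.pi)) * Real.exp (-(Real.pi/2) * r ^ 2) := by
          ring

lemma f_norm (k : ℕ) (lam mu : ℂ) (z : ℂ) :
    ‖f k lam mu z‖ = ‖z‖ ^ k *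
      Real.exp (Real.pi * (mu * z).re + Real.pi * (lam * (starRingEnd ℂ) z).re
        - Real.pi * ‖z‖ ^ 2) := by
  rw [f, norm_mul, norm_pow, Complex.norm_exp]
  congr 2
  simp [Complex.sub_re, Complex.add_re, Complex.re_ofReal_mul, mul_assoc,
    ← Complex.ofReal_pow]

lemma f_le_bound (k : ℕ) (lam mu : ℂ) (c : ℝ) (hc : ‖mu‖ ≤ c) (z : ℂ) :
    ‖f k lam mu z‖ ≤ ‖z‖ ^ k *
      Real.exp (Real.pi * (c + ‖lam‖) * ‖z‖ - Real.pi * ‖z‖ ^ 2) := by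
  rw [f_norm]
  apply mul_le_mul_of_nonneg_left _ (by positivity)
  apply Real.exp_le_exp.mpr
  have h1 : (mu * z).re ≤ ‖mu‖ * ‖z‖ := by
    simpa [map_mul] using Complex.re_le_norm (mu * z)
  have h2 : (lam * (starRingEnd ℂ) z).re ≤ ‖lam‖ * ‖z‖ := by
    simpa [map_mul] using Complex.re_le_norm (lam * (starRingEnd ℂ) z)
  have hπ := Real.pi_pos
  have hz := norm_nonneg z
  have hm := norm_nonneg mu
  have h3 : ‖mu‖ * ‖z‖ ≤ c * ‖z‖ :=
    mul_le_mul_of_nonneg_right hc hz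
  nlinarith [mul_le_mul_of_nonneg_left (h1.trans h3) hπ.le,
    mul_le_mul_of_nonneg_left h2 hπ.le]

lemma f_integrable (k : ℕ) (lam mu : ℂ) : Integrable (f k lam mu) := by
  refine (bound_integrable k (Real.pi * (‖mu‖ + ‖lam‖))).mono'
    ?_ (Filter.Eventually.of_forall fun z => ?_)
  · apply Continuous.aestronglyMeasurable
    unfold f
    have hconj : Continuous fun z : ℂ => (starRingEnd ℂ) z := Complex.continuous_conj
    have habs : Continuous fun z : ℂ => ‖z‖ := continuous_norm
    fun_prop
  · have := f_le_bound k lam mu (‖mu‖) le_rfl z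
    calc ‖f k lam mu z‖ ≤ _ := this
    _ ≤ _ := by rw [mul_assoc]

lemma base (lam mu : ℂ) :
    ∫ z : ℂ, f 0 lam mu z = Complex.exp ((Real.pi : ℂ) * lam * mu) := by
  rw [← (Complex.volume_preserving_equiv_real_prod.symm Complex.measurableEquivRealProd).integral_comp
      Complex.measurableEquivRealProd.symm.measurableEmbedding (f 0 lam mu)]
  have key : ∀ p : ℝ × ℝ, f 0 lam mu (Complex.measurableEquivRealProd.symm p) =
      Complex.exp (-(Real.pi:ℂ) * (p.1:ℂ)^2 + ((Real.pi:ℂ)*(mu+lam)) * (p.1:ℂ) + 0) *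
      Complex.exp (-(Real.pi:ℂ) * (p.2:ℂ)^2 + (Complex.I*(Real.pi:ℂ)*(mu-lam)) * (p.2:ℂ) + 0) := by
    intro p
    rw [f, pow_zero, one_mul, Complex.measurableEquivRealProd_symm_apply, ← Complex.exp_add]
    congr 1
    have habs : (‖(⟨p.1, p.2⟩ : ℂ)‖ : ℂ)^2 = (p.1:ℂ)^2 + (p.2:ℂ)^2 := by
      rw [← Complex.ofReal_pow, Complex.sq_norm, Complex.normSq_apply]
      push_cast
      ring
    have hz : (⟨p.1, p.2⟩ : ℂ) = (p.1:ℂ) + (p.2:ℂ) * Complex.I := by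
      rw [Complex.mk_eq_add_mul_I]
    have hconj : (starRingEnd ℂ) (⟨p.1, p.2⟩ : ℂ) = (p.1:ℂ) - (p.2:ℂ) * Complex.I := by
      rw [hz]
      simp [Complex.conj_ofReal]
      ring
    rw [habs, hconj, hz]
    ring
  simp_rw [key]
  rw [MeasureTheory.Measure.volume_eq_prod,
    integral_prod_mul (f := fun x : ℝ => Complex.exp (-(Real.pi:ℂ) * (x:ℂ)^2
      + ((Real.pi:ℂ)*(mu+lam)) * (x:ℂ) + 0))
      (g := fun y : ℝ => Complex.exp (-(Real.pi:ℂ) * (y:ℂ)^2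
      + (Complex.I*(Real.pi:ℂ)*(mu-lam)) * (y:ℂ) + 0)),
    integral_cexp_quadratic (by simp [Real.pi_pos] : (-(Real.pi:ℂ)).re < 0),
    integral_cexp_quadratic (by simp [Real.pi_pos] : (-(Real.pi:ℂ)).re < 0)]
  have hπ : (Real.pi:ℂ) ≠ 0 := Complex.ofReal_ne_zero.mpr Real.pi_ne_zero
  rw [neg_neg, div_self hπ, Complex.one_cpow, one_mul, one_mul, ← Complex.exp_add]
  congr 1
  have hI : (Complex.I*(Real.pi:ℂ)*(mu-lam))^2 = -((Real.pi:ℂ)^2*(mu-lam)^2) := by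
    rw [mul_pow, mul_pow, Complex.I_sq]
    ring
  rw [hI]
  field_simp
  ring

lemma main (lam : ℂ) : ∀ (k : ℕ) (mu : ℂ),
    ∫ z : ℂ, f k lam mu z = lam ^ k * Complex.exp ((Real.pi:ℂ) * lam * mu) := by
  intro k
  induction k with
  | zero => intro mu; simpa using base lam mu
  | succ k ih =>
    intro mu
    have hπC : (Real.pi : ℂ) ≠ 0 := Complex.ofReal_ne_zero.mpr Real.pi_ne_zero
    have hbd : Integrable (fun z : ℂ => Real.pi * (‖z‖ ^ (k+1) *
        Real.exp (Real.pi * ((‖mu‖ + 1) + ‖lam‖) * ‖z‖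
          - Real.pi * ‖z‖ ^ 2))) :=
      (bound_integrable (k+1) (Real.pi * ((‖mu‖ + 1) + ‖lam‖))).const_mul _
    have hdom := hasDerivAt_integral_of_dominated_loc_of_deriv_le
      (F := fun μ' (z : ℂ) => f k lam μ' z)
      (F' := fun μ' (z : ℂ) => (Real.pi:ℂ) * f (k+1) lam μ' z)
      (x₀ := mu) (μ := volume)
      (bound := fun z : ℂ => Real.pi * (‖z‖ ^ (k+1) *
        Real.exp (Real.pi * ((‖mu‖ + 1) + ‖lam‖) * ‖z‖
          - Real.pi * ‖z‖ ^ 2)))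
      (Metric.ball_mem_nhds mu one_pos)
      (Filter.Eventually.of_forall fun μ' => (f_integrable k lam μ').aestronglyMeasurable)
      (f_integrable k lam mu)
      (((f_integrable (k+1) lam mu).const_mul _).aestronglyMeasurable)
      (Filter.Eventually.of_forall fun z μ' hμ' => ?_)
      hbd
      (Filter.Eventually.of_forall fun z μ' hμ' => ?_)
    · obtain ⟨-, hderiv⟩ := hdom
      have heq : (fun μ' : ℂ => ∫ z : ℂ, f k lam μ' z)
          = fun μ' : ℂ => lam ^ k * Complex.exp ((Real.pi:ℂ)*lam*μ') := funext ih
      rw [heq] at hderiv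
      have h2 : HasDerivAt (fun μ' : ℂ => lam ^ k * Complex.exp ((Real.pi:ℂ)*lam*μ'))
          (lam ^ k * (Complex.exp ((Real.pi:ℂ)*lam*mu) * ((Real.pi:ℂ)*lam))) mu := by
        have := (((hasDerivAt_id mu).const_mul ((Real.pi:ℂ)*lam)).cexp).const_mul (lam ^ k)
        simpa [mul_comm, mul_assoc] using this
      have huniq := h2.unique hderiv
      rw [MeasureTheory.integral_const_mul] at huniq
      apply mul_left_cancel₀ hπC
      rw [← huniq]
      ring
    · -- bound
      have hμ : ‖μ'‖ ≤ ‖mu‖ + 1 := by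
        have hd := (Metric.mem_ball.mp hμ').le
        rw [Complex.dist_eq] at hd
        calc ‖μ'‖ = ‖mu + (μ' - mu)‖ := by ring_nf
        _ ≤ ‖mu‖ + ‖μ' - mu‖ := norm_add_le _ _
        _ ≤ ‖mu‖ + 1 := by linarith
      have hb := f_le_bound (k+1) lam μ' (‖mu‖ + 1) hμ z
      calc ‖(Real.pi:ℂ) * f (k+1) lam μ' z‖
          = Real.pi * ‖f (k+1) lam μ' z‖ := by
            rw [norm_mul, Complex.norm_real, Real.norm_eq_abs,
              _root_.abs_of_nonneg Real.pi_pos.le]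
        _ ≤ _ := mul_le_mul_of_nonneg_left hb Real.pi_pos.le
    · -- hasDerivAt
      have h1 : HasDerivAt (fun μ' : ℂ => (Real.pi:ℂ) * μ' * z
          + ((Real.pi:ℂ) * lam * (starRingEnd ℂ) z - (Real.pi:ℂ) * (‖z‖ : ℂ)^2))
          ((Real.pi:ℂ) * z) μ' := by
        have := (((hasDerivAt_id μ').const_mul ((Real.pi:ℂ))).mul_const z).add_const
          ((Real.pi:ℂ) * lam * (starRingEnd ℂ) z - (Real.pi:ℂ) * (‖z‖ : ℂ)^2)
        simpa using this
      have h2 := (h1.cexp).const_mul (z ^ k)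
      have harg : ∀ μ' : ℂ, (Real.pi:ℂ) * μ' * z
          + ((Real.pi:ℂ) * lam * (starRingEnd ℂ) z - (Real.pi:ℂ) * (‖z‖ : ℂ)^2)
          = (Real.pi:ℂ) * μ' * z + (Real.pi:ℂ) * lam * (starRingEnd ℂ) z
            - (Real.pi:ℂ) * (‖z‖ : ℂ)^2 := by intro μ'; ring
      simp_rw [f, harg] at h2 ⊢
      convert h2 using 1
      · rfl
      rw [← harg]
      ring

end Stmt1Aux

/-- For every `l : ℕ` and `λ ∈ ℂ`, the function `z ↦ z^l e^{πλz̄ − π|z|²}` is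
integrable over `ℂ` and its integral equals `λ^l`. -/
theorem stmt_1 (l : ℕ) (lam : ℂ) :
    Integrable (fun z : ℂ =>
      z ^ l * Complex.exp ((Real.pi : ℂ) * lam * (starRingEnd ℂ) z
        - (Real.pi : ℂ) * (‖z‖ : ℂ) ^ 2)) ∧
    ∫ z : ℂ, z ^ l * Complex.exp ((Real.pi : ℂ) * lam * (starRingEnd ℂ) z
        - (Real.pi : ℂ) * (‖z‖ : ℂ) ^ 2) = lam ^ l := by
  have hf : ∀ z : ℂ, z ^ l * Complex.exp ((Real.pi : ℂ) * lam * (starRingEnd ℂ) z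
      - (Real.pi : ℂ) * (‖z‖ : ℂ) ^ 2) = Stmt1Aux.f l lam 0 z := by
    intro z; simp [Stmt1Aux.f]
  constructor
  · simp only [hf]
    exact Stmt1Aux.f_integrable l lam 0
  · simp only [hf]
    rw [Stmt1Aux.main lam l 0]
    simp
end

section
/- For every nonnegative integer l and every λ ∈ ℂ, the function z ↦ |z|^{2l} · e^{πλz − π|z|²} is integrable over ℂ and ∫_ℂ |z|^{2l} e^{πλz − π|z|²} dz = l! / π^l. -/
/-!
In polar coordinates `z = r e^{iθ}` the weight `|z|^{2l} e^{-π|z|²}` is radial, while by the mean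
value property the integral of the entire function `e^{πλz}` over each circle `|z| = r` is `2π`
times its value `1` at the origin. Hence the integral does not depend on `λ`, and for `λ = 0` it is
the Gamma integral `π Γ(l + 1) / π^{l + 1} = l! / π^l`. Integrability comes from the Gaussian bound
`|z|^{2l} e^{π Re(λz) - π|z|²} ≤ C e^{-π|z|²/2}`.
-/

open MeasureTheory Real Set
open scoped Nat

theorem Complex.integrableOn_polarCoord_symm_smul {E : Type*} [NormedAddCommGroup E]
    [NormedSpace ℝ E] {f : ℂ → E} (hf : Integrable f) :
    IntegrableOn (fun p : ℝ × ℝ => p.1 • f (Complex.polarCoord.symm p)) polarCoord.target := by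
  have hf' : Integrable (f ∘ measurableEquivRealProd.symm) :=
    (Complex.volume_preserving_equiv_real_prod.symm.integrable_comp_emb
      measurableEquivRealProd.symm.measurableEmbedding).2 hf
  have := (integrableOn_image_iff_integrableOn_abs_det_fderiv_smul volume
    polarCoord.open_target.measurableSet
    (fun p _ => (hasFDerivAt_polarCoord_symm p).hasFDerivWithinAt)
    polarCoord.symm.injOn _).1 (hf'.integrableOn (s := polarCoord.symm '' polarCoord.target))
  refine this.congr_fun (fun p hp => ?_) polarCoord.open_target.measurableSet
  simp only [det_fderivPolarCoordSymm, abs_of_pos (show 0 < p.1 from hp.1), Function.comp_apply,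
    measurableEquivRealProd_symm_polarCoord_symm_apply]

theorem DiffContOnCl.integral_Ioo_circleMap {E : Type*} [NormedAddCommGroup E] [NormedSpace ℂ E]
    [CompleteSpace E] {f : ℂ → E} {c : ℂ} {R : ℝ} (hf : DiffContOnCl ℂ f (Metric.ball c |R|)) :
    ∫ θ in Ioo (-π) π, f (circleMap c R θ) = (2 * π) • f c := by
  have h := hf.circleAverage
  rw [circleAverage_eq_integral_add (-π),
    intervalIntegral.integral_comp_add_right (fun θ => f (circleMap c R θ)), zero_add,
    show 2 * π + -π = π by ring, intervalIntegral.integral_of_le (by linarith [pi_pos]),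
    integral_Ioc_eq_integral_Ioo] at h
  rw [← h, smul_inv_smul₀ (by positivity)]

theorem Complex.polarCoord_symm_eq_circleMap (p : ℝ × ℝ) :
    Complex.polarCoord.symm p = circleMap 0 p.1 p.2 := by
  rw [Complex.polarCoord_symm_apply, circleMap_zero, Complex.exp_mul_I, ← Complex.ofReal_cos,
    ← Complex.ofReal_sin]

section RadialWeight

variable {E : Type*} [NormedAddCommGroup E] [NormedSpace ℂ E] [CompleteSpace E]
  {g : ℝ → ℂ} {h : ℂ → E}

theorem Differentiable.integral_radial_smul_eq_polar (hh : Differentiable ℂ h)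
    (hgh : Integrable fun z => g ‖z‖ • h z) :
    ∫ z, g ‖z‖ • h z = (2 * π * ∫ r in Ioi 0, r * g r) • h 0 := by
  calc ∫ z, g ‖z‖ • h z
      = ∫ p in Ioi 0 ×ˢ Ioo (-π) π,
          p.1 • g ‖Complex.polarCoord.symm p‖ • h (Complex.polarCoord.symm p) := by
        rw [← Complex.integral_comp_polarCoord_symm]; rfl
    _ = ∫ r in Ioi 0, ∫ θ in Ioo (-π) π,
          r • g ‖circleMap 0 r θ‖ • h (circleMap 0 r θ) := by
        rw [Measure.volume_eq_prod,
          setIntegral_prod _ (Complex.integrableOn_polarCoord_symm_smul hgh)]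
        simp only [Complex.polarCoord_symm_eq_circleMap]
    _ = ∫ r in Ioi 0, (2 * π * (r * g r)) • h 0 := by
        refine setIntegral_congr_fun measurableSet_Ioi fun r hr => ?_
        simp only [norm_circleMap_zero, abs_of_pos (show 0 < r from hr)]
        rw [integral_smul, integral_smul, hh.diffContOnCl.integral_Ioo_circleMap,
          ← Complex.coe_smul r, ← Complex.coe_smul (2 * π), smul_smul, smul_smul]
        push_cast
        ring_nf
    _ = (2 * π * ∫ r in Ioi 0, r * g r) • h 0 := by
        rw [integral_smul_const, integral_const_mul]

theorem Differentiable.integral_radial_smul_eq (hh : Differentiable ℂ h)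
    (hgh : Integrable fun z => g ‖z‖ • h z) (hg : Integrable fun z : ℂ => g ‖z‖) :
    ∫ z, g ‖z‖ • h z = (∫ z : ℂ, g ‖z‖) • h 0 := by
  have h1 := (differentiable_const (1 : ℂ)).integral_radial_smul_eq_polar (g := g)
    (by simpa using hg)
  simp only [smul_eq_mul, mul_one] at h1
  rw [hh.integral_radial_smul_eq_polar hgh, h1]

end RadialWeight

theorem integrable_exp_neg_mul_sq_norm {V : Type*} [NormedAddCommGroup V] [InnerProductSpace ℝ V]
    [FiniteDimensional ℝ V] [MeasurableSpace V] [BorelSpace V] {b : ℝ} (hb : 0 < b) :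
    Integrable fun v : V => exp (-b * ‖v‖ ^ 2) := by
  refine (GaussianFourier.integrable_cexp_neg_mul_sq_norm_add (V := V) (b := b) hb 0 0).norm.congr
    (.of_forall fun v => ?_)
  simp only [zero_mul, add_zero]
  rw [Complex.norm_exp, ← Complex.ofReal_pow, ← Complex.ofReal_neg,
    ← Complex.ofReal_mul, Complex.ofReal_re]

theorem pow_mul_exp_sub_le {b : ℝ} (hb : 0 < b) (n : ℕ) (c : ℝ) {r : ℝ} (hr : 0 ≤ r) :
    r ^ n * exp (c * r - b * r ^ 2) ≤
      n ! * exp ((1 + c) ^ 2 / (2 * b)) * exp (-(b / 2) * r ^ 2) := by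
  have hpow : r ^ n ≤ n ! * exp r := by
    have := pow_div_factorial_le_exp r hr n
    rwa [div_le_iff₀ (by positivity), mul_comm] at this
  have hsq : r + (c * r - b * r ^ 2) ≤ (1 + c) ^ 2 / (2 * b) + -(b / 2) * r ^ 2 := by
    rw [← sub_nonneg]
    have : (1 + c) ^ 2 / (2 * b) + -(b / 2) * r ^ 2 - (r + (c * r - b * r ^ 2))
        = (b * r - (1 + c)) ^ 2 / (2 * b) := by
      field_simp
      ring
    rw [this]
    positivity
  calc r ^ n * exp (c * r - b * r ^ 2) ≤ n ! * exp r * exp (c * r - b * r ^ 2) := by gcongr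
    _ = n ! * exp (r + (c * r - b * r ^ 2)) := by rw [mul_assoc, ← exp_add]
    _ ≤ n ! * exp ((1 + c) ^ 2 / (2 * b) + -(b / 2) * r ^ 2) := by gcongr
    _ = n ! * exp ((1 + c) ^ 2 / (2 * b)) * exp (-(b / 2) * r ^ 2) := by rw [exp_add, mul_assoc]

theorem integrable_norm_pow_mul_cexp_mul_sub_mul_sq_norm (n : ℕ) {b : ℝ} (hb : 0 < b) (lam : ℂ) :
    Integrable fun z : ℂ => (‖z‖ : ℂ) ^ n * Complex.exp (b * lam * z - b * (‖z‖ : ℂ) ^ 2) := by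
  have hcont : Continuous fun z : ℂ =>
      (‖z‖ : ℂ) ^ n * Complex.exp (b * lam * z - b * (‖z‖ : ℂ) ^ 2) := by fun_prop
  refine ((integrable_exp_neg_mul_sq_norm (half_pos hb)).const_mul
    (n ! * exp ((1 + b * ‖lam‖) ^ 2 / (2 * b)))).mono' hcont.aestronglyMeasurable
    (.of_forall fun z => ?_)
  have hre : (b * lam * z - b * (‖z‖ : ℂ) ^ 2).re ≤ b * ‖lam‖ * ‖z‖ - b * ‖z‖ ^ 2 := by
    have : (lam * z).re ≤ ‖lam‖ * ‖z‖ := (Complex.re_le_norm _).trans (norm_mul _ _).le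
    rw [mul_assoc, ← Complex.ofReal_pow, Complex.sub_re, Complex.re_ofReal_mul,
      ← Complex.ofReal_mul, Complex.ofReal_re]
    nlinarith
  calc ‖(‖z‖ : ℂ) ^ n * Complex.exp (b * lam * z - b * (‖z‖ : ℂ) ^ 2)‖
      = ‖z‖ ^ n * exp (b * lam * z - b * (‖z‖ : ℂ) ^ 2).re := by
        rw [norm_mul, norm_pow, Complex.norm_exp, Complex.norm_real, norm_norm]
    _ ≤ ‖z‖ ^ n * exp (b * ‖lam‖ * ‖z‖ - b * ‖z‖ ^ 2) := by gcongr
    _ ≤ _ := pow_mul_exp_sub_le hb n _ (norm_nonneg z)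

theorem integral_norm_pow_mul_cexp_neg_mul_sq (l : ℕ) {b : ℝ} (hb : 0 < b) :
    ∫ z : ℂ, (‖z‖ : ℂ) ^ (2 * l) * Complex.exp (-b * (‖z‖ : ℂ) ^ 2) = π * l ! / b ^ (l + 1) := by
  have h := Complex.integral_rpow_mul_exp_neg_mul_rpow (p := 2) (q := 2 * l) one_le_two
    (by linarith [(Nat.cast_nonneg l : (0 : ℝ) ≤ l)]) hb
  have e₁ : ((2 * l : ℝ) + 2) / 2 = l + 1 := by ring
  have e₂ : -((2 * l : ℝ) + 2) / 2 = -(l + 1 : ℕ) := by push_cast; ring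
  rw [e₁, e₂, Real.Gamma_nat_eq_factorial, rpow_neg hb.le, rpow_natCast] at h
  calc ∫ z : ℂ, (‖z‖ : ℂ) ^ (2 * l) * Complex.exp (-b * (‖z‖ : ℂ) ^ 2)
      = ∫ z : ℂ, ((‖z‖ ^ (2 * l : ℝ) * exp (-b * ‖z‖ ^ (2 : ℝ)) : ℝ) : ℂ) := by
        congr 1 with z
        norm_cast
    _ = π * l ! / b ^ (l + 1) := by
        rw [integral_complex_ofReal, h]
        push_cast
        ring

/-- For every `l : ℕ` and `λ ∈ ℂ`, the function `z ↦ |z|^{2l} e^{πλz − π|z|²}` is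
integrable over `ℂ` and its integral equals `l!/π^l`. -/
theorem stmt_3 (l : ℕ) (lam : ℂ) :
    Integrable (fun z : ℂ =>
      (‖z‖ : ℂ) ^ (2 * l) * Complex.exp ((Real.pi : ℂ) * lam * z
        - (Real.pi : ℂ) * (‖z‖ : ℂ) ^ 2)) ∧
    ∫ z : ℂ, (‖z‖ : ℂ) ^ (2 * l) *
        Complex.exp ((Real.pi : ℂ) * lam * z - (Real.pi : ℂ) * (‖z‖ : ℂ) ^ 2)
      = (l.factorial : ℂ) / (Real.pi : ℂ) ^ l := by
  set g : ℝ → ℂ := fun r => (r : ℂ) ^ (2 * l) * Complex.exp (-π * (r : ℂ) ^ 2)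
  have hsplit : ∀ lam z : ℂ,
      (‖z‖ : ℂ) ^ (2 * l) * Complex.exp (π * lam * z - π * (‖z‖ : ℂ) ^ 2)
        = g ‖z‖ • Complex.exp (π * lam * z) := fun lam z => by
    rw [smul_eq_mul, sub_eq_neg_add, Complex.exp_add, ← neg_mul]
    simp only [g]
    ring
  have hint := integrable_norm_pow_mul_cexp_mul_sub_mul_sq_norm (2 * l) pi_pos
  refine ⟨hint lam, ?_⟩
  have hexp : Differentiable ℂ fun z => Complex.exp (π * lam * z) := by fun_prop
  calc _ = ∫ z, g ‖z‖ • Complex.exp (π * lam * z) := by simp only [hsplit]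
    _ = (∫ z : ℂ, g ‖z‖) • Complex.exp (π * lam * 0) :=
        hexp.integral_radial_smul_eq ((hint lam).congr (.of_forall (hsplit lam)))
          (by simpa [g] using hint 0)
    _ = π * l ! / π ^ (l + 1) := by
        rw [mul_zero, Complex.exp_zero, smul_eq_mul, mul_one]
        exact integral_norm_pow_mul_cexp_neg_mul_sq l pi_pos
    _ = l ! / π ^ l := by
        rw [pow_succ, mul_comm (π : ℂ), mul_div_mul_right _ _ (Complex.ofReal_ne_zero.2 pi_ne_zero)]
end

section
/- For every nonnegative integer ν and every c ∈ ℂ with |c| < 1, the function (z,w) ↦ |w|^{2ν} · e^{π c z w − π(|z|² + |w|²)} is integrable over ℂ² and ∫_{ℂ²} |w|^{2ν} e^{π c z w − π(|z|² + |w|²)} dz dw = ν! / π^ν. -/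
/-!
Integrate in `z` first. For fixed `w` the `z`-integral is a Gaussian with a complex-linear
term `a z`, and such a Gaussian integrates to `π / b` whatever `a` is, so the inner integral
is `|w|^{2ν} e^{-π|w|²}`, whose integral is the Gamma-function moment `ν! / π^ν`. Fubini is
justified by `Re (c z w) ≤ |z| |w| ≤ (|z|² + |w|²) / 2`, which dominates the integrand by
`e^{-π|z|²/2} · |w|^{2ν} e^{-π|w|²/2}`.
-/

open MeasureTheory

open Nat in
theorem Complex.integral_norm_pow_mul_exp_neg_mul_sq (n : ℕ) {b : ℝ} (hb : 0 < b) :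
    ∫ w : ℂ, ‖w‖ ^ (2 * n) * Real.exp (-b * ‖w‖ ^ 2) = Real.pi * n ! / b ^ (n + 1) := by
  have h := Complex.integral_rpow_mul_exp_neg_mul_rpow one_le_two
    ((neg_lt_zero.2 two_pos).trans_le (Nat.cast_nonneg (2 * n))) hb
  simp only [Real.rpow_natCast, Real.rpow_two] at h
  rw [h, show (((2 * n : ℕ) : ℝ) + 2) / 2 = n + 1 by push_cast; ring,
    show -(((2 * n : ℕ) : ℝ) + 2) / 2 = -(n + 1 : ℕ) by push_cast; ring,
    Real.Gamma_nat_eq_factorial, Real.rpow_neg hb.le, Real.rpow_natCast]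
  field_simp

theorem Complex.integrable_norm_pow_mul_exp_neg_mul_sq (n : ℕ) {b : ℝ} (hb : 0 < b) :
    Integrable fun w : ℂ => ‖w‖ ^ (2 * n) * Real.exp (-b * ‖w‖ ^ 2) :=
  Integrable.of_integral_ne_zero <| by
    rw [Complex.integral_norm_pow_mul_exp_neg_mul_sq n hb]; positivity

theorem Complex.integrable_exp_neg_mul_sq_norm {b : ℝ} (hb : 0 < b) :
    Integrable fun w : ℂ => Real.exp (-b * ‖w‖ ^ 2) := by
  simpa using Complex.integrable_norm_pow_mul_exp_neg_mul_sq 0 hb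

/- In coordinates `z = x + iy` the real and imaginary directions contribute the factors
`exp (a² / 4b)` and `exp (-a² / 4b)`, which cancel. -/
theorem Complex.integral_cexp_mul_sub_mul_sq_norm {b : ℂ} (hb : 0 < b.re) (a : ℂ) :
    ∫ z : ℂ, Complex.exp (a * z - b * (‖z‖ : ℂ) ^ 2) = Real.pi / b := by
  rw [← Complex.volume_preserving_equiv_pi.symm.integral_comp
    Complex.measurableEquivPi.symm.measurableEmbedding]
  convert GaussianFourier.integral_cexp_neg_mul_sum_add hb ![a, a * Complex.I] using 1
  · congr 1 with v
    simp only [Complex.measurableEquivPi_symm_apply, ← Complex.ofReal_pow, Complex.sq_norm,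
      Complex.normSq_add_mul_I, Fin.sum_univ_two]
    push_cast
    ring_nf
  · simp [mul_pow]

theorem Complex.norm_exp_mul_mul_sub_le {b : ℝ} (hb : 0 ≤ b) {c : ℂ} (hc : ‖c‖ ≤ 1)
    (z w : ℂ) :
    ‖Complex.exp (b * c * z * w - b * ((‖z‖ : ℂ) ^ 2 + (‖w‖ : ℂ) ^ 2))‖
      ≤ Real.exp (-(b / 2) * ‖z‖ ^ 2) * Real.exp (-(b / 2) * ‖w‖ ^ 2) := by
  have hre : (c * (z * w)).re ≤ ‖z‖ * ‖w‖ := calc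
    (c * (z * w)).re ≤ ‖c‖ * (‖z‖ * ‖w‖) := by simpa using Complex.re_le_norm (c * (z * w))
    _ ≤ ‖z‖ * ‖w‖ := mul_le_of_le_one_left (by positivity) hc
  rw [Complex.norm_exp, ← Real.exp_add, Real.exp_le_exp]
  norm_cast
  simp only [mul_assoc, Complex.sub_re, Complex.re_ofReal_mul, Complex.ofReal_re]
  nlinarith [mul_le_mul_of_nonneg_left hre hb, sq_nonneg (‖z‖ - ‖w‖)]

/-- For every `ν : ℕ` and `c ∈ ℂ` with `|c| < 1`, the function
`(z,w) ↦ |w|^{2ν} e^{πczw − π(|z|²+|w|²)}` is integrable over `ℂ²` and its integral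
equals `ν!/π^ν`. -/
theorem stmt_5 (ν : ℕ) (c : ℂ) (hc : ‖c‖ < 1) :
    Integrable (fun p : ℂ × ℂ =>
      (‖p.2‖ : ℂ) ^ (2 * ν) * Complex.exp ((Real.pi : ℂ) * c * p.1 * p.2
        - (Real.pi : ℂ) * ((‖p.1‖ : ℂ) ^ 2 + (‖p.2‖ : ℂ) ^ 2))) ∧
    ∫ p : ℂ × ℂ, (‖p.2‖ : ℂ) ^ (2 * ν) *
        Complex.exp ((Real.pi : ℂ) * c * p.1 * p.2
          - (Real.pi : ℂ) * ((‖p.1‖ : ℂ) ^ 2 + (‖p.2‖ : ℂ) ^ 2))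
      = (ν.factorial : ℂ) / (Real.pi : ℂ) ^ ν := by
  set F : ℂ × ℂ → ℂ := fun p => (‖p.2‖ : ℂ) ^ (2 * ν) * Complex.exp ((Real.pi : ℂ) * c * p.1 * p.2
    - (Real.pi : ℂ) * ((‖p.1‖ : ℂ) ^ 2 + (‖p.2‖ : ℂ) ^ 2))
  have hπ := Real.pi_pos
  have hF : Integrable F := by
    refine ((Complex.integrable_exp_neg_mul_sq_norm (half_pos hπ)).mul_prod
      (Complex.integrable_norm_pow_mul_exp_neg_mul_sq ν (half_pos hπ))).mono' (by fun_prop)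
      (ae_of_all _ fun p => ?_)
    rw [norm_mul, norm_pow, Complex.norm_real, norm_norm, mul_left_comm]
    gcongr
    exact Complex.norm_exp_mul_mul_sub_le hπ.le hc.le p.1 p.2
  have hinner (w : ℂ) :
      ∫ z, F (z, w) = ((‖w‖ ^ (2 * ν) * Real.exp (-Real.pi * ‖w‖ ^ 2) : ℝ) : ℂ) := by
    have hsplit (z : ℂ) : F (z, w) = ((‖w‖ ^ (2 * ν) * Real.exp (-Real.pi * ‖w‖ ^ 2) : ℝ) : ℂ)
        * Complex.exp ((Real.pi * c * w) * z - Real.pi * (‖z‖ : ℂ) ^ 2) := by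
      simp only [F]
      push_cast
      rw [mul_assoc _ (Complex.exp _), ← Complex.exp_add]
      ring_nf
    simp_rw [hsplit]
    rw [integral_const_mul, Complex.integral_cexp_mul_sub_mul_sq_norm (by simpa using hπ),
      div_self (by exact_mod_cast hπ.ne'), mul_one]
  refine ⟨hF, ?_⟩
  rw [Measure.volume_eq_prod, integral_prod_symm _ hF]
  simp_rw [hinner]
  rw [integral_complex_ofReal, Complex.integral_norm_pow_mul_exp_neg_mul_sq ν hπ]
  push_cast
  field_simp
  ring
end

section
/- For all nonnegative integers r and m, one has ∫_{ℂ⁴} |z₁^r · (z₁z₄ − z₂z₃)^m|² · e^{−π(|z₁|² + |z₂|² + |z₃|² + |z₄|²)} dz₁ dz₂ dz₃ dz₄ = m! · (r+m+1)! / ((r+1) · π^{r+2m}). -/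
/-!
Monomials are orthogonal for the Gaussian weight `e^{-c|z|²}` on `ℂ`: in polar coordinates
`z^a z̄^b e^{-c|z|²}` becomes `ρ^{a+b+1} e^{-cρ²} e^{i(a-b)θ}`, whose angular integral vanishes
unless `a = b`, while the radial one is a Gamma integral. Expanding `(z₁z₄ − z₂z₃)^m` binomially
writes `φ` as a sum of `m + 1` monomials with distinct exponents `(r+j, m-j, m-j, j)`, so
`‖φ‖² = ∑ⱼ C(m,j)² (r+j)! ((m-j)!)² j! / π^{r+2m} = m!² r! ∑ⱼ C(r+j, r) / π^{r+2m}`, and the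
hockey-stick identity evaluates the last sum.
-/

open MeasureTheory Real Finset ComplexConjugate

noncomputable def gaussianMonomial (c : ℝ) (a b : ℕ) (z : ℂ) : ℂ :=
  z ^ a * conj z ^ b * (rexp (-c * ‖z‖ ^ 2) : ℂ)

variable {c : ℝ}

lemma norm_gaussianMonomial (a b : ℕ) (z : ℂ) :
    ‖gaussianMonomial c a b z‖ = ‖z‖ ^ (a + b) * rexp (-c * ‖z‖ ^ 2) := by
  rw [gaussianMonomial, norm_mul, norm_mul, norm_pow, norm_pow, Complex.norm_conj,
    Complex.norm_real, norm_of_nonneg (exp_pos _).le, pow_add]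

lemma integrable_gaussianMonomial (hc : 0 < c) (a b : ℕ) :
    Integrable (gaussianMonomial c a b) := by
  have hmeas : AEStronglyMeasurable (gaussianMonomial c a b) := by
    unfold gaussianMonomial; fun_prop
  refine (integrable_norm_iff hmeas).1 ?_
  simp_rw [norm_gaussianMonomial]
  refine (integrable_fun_norm_addHaar volume (f := fun y => y ^ (a + b) * rexp (-c * y ^ 2))).2 ?_
  refine (integrableOn_rpow_mul_exp_neg_mul_sq hc (s := (a + b + 1 : ℕ))
    (neg_one_lt_zero.trans_le (Nat.cast_nonneg _))).congr_fun
    (fun y _ => ?_) measurableSet_Ioi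
  simp only [Complex.finrank_real_complex, rpow_natCast, smul_eq_mul]
  ring

lemma integral_pow_two_mul_add_one_mul_exp_neg_mul_sq (hc : 0 < c) (a : ℕ) :
    ∫ ρ in Set.Ioi (0 : ℝ), ρ ^ (2 * a + 1) * rexp (-c * ρ ^ 2) =
      a.factorial / (2 * c ^ (a + 1)) := by
  have h := integral_rpow_mul_exp_neg_mul_rpow two_pos (q := (2 * a + 1 : ℕ))
    (neg_one_lt_zero.trans_le (Nat.cast_nonneg _)) hc
  have hq : ((2 * a + 1 : ℕ) + 1 : ℝ) / 2 = a + 1 := by push_cast; ring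
  rw [neg_div, hq, Gamma_nat_eq_factorial, rpow_neg hc.le, ← Nat.cast_succ, rpow_natCast] at h
  refine (setIntegral_congr_fun measurableSet_Ioi fun ρ _ => ?_).trans (h.trans ?_)
  · simp only [rpow_natCast, rpow_two]
  · field_simp

lemma integral_exp_int_mul_I (n : ℤ) :
    ∫ θ in Set.Ioo (-π) π, Complex.exp (n * θ * Complex.I) =
      (if n = 0 then 2 * π else 0 : ℂ) := by
  split_ifs with hn
  · rw [hn, Int.cast_zero]
    simp only [zero_mul, Complex.exp_zero, setIntegral_const, Complex.real_smul, mul_one,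
      volume_real_Ioo_of_le (neg_le_self pi_pos.le)]
    push_cast
    ring
  · have hc : (n : ℂ) * Complex.I ≠ 0 := by simp [hn]
    simp_rw [mul_right_comm _ _ Complex.I]
    rw [← integral_Ioc_eq_integral_Ioo, ← intervalIntegral.integral_of_le (by linarith [pi_pos]),
      integral_exp_mul_complex hc, div_eq_zero_iff, sub_eq_zero, Complex.exp_eq_exp_iff_exists_int]
    exact Or.inl ⟨n, by push_cast; ring⟩

lemma smul_gaussianMonomial_polarCoord_symm (a b : ℕ) {ρ : ℝ} (hρ : 0 < ρ) (θ : ℝ) :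
    ρ • gaussianMonomial c a b (Complex.polarCoord.symm (ρ, θ)) =
      ((ρ ^ (a + b + 1) * rexp (-c * ρ ^ 2) : ℝ) : ℂ) *
        Complex.exp (((a - b : ℤ) : ℂ) * θ * Complex.I) := by
  have hz : Complex.polarCoord.symm (ρ, θ) = ρ * Complex.exp (θ * Complex.I) := by
    simp [Complex.exp_mul_I, ← Complex.ofReal_cos, ← Complex.ofReal_sin]
  have hconj : conj (Complex.polarCoord.symm (ρ, θ)) = ρ * Complex.exp (-(θ * Complex.I)) := by
    rw [hz, map_mul, Complex.conj_ofReal, ← Complex.exp_conj, map_mul, Complex.conj_ofReal,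
      Complex.conj_I, mul_neg]
  have hnorm : ‖Complex.polarCoord.symm (ρ, θ)‖ = ρ := by
    rw [Complex.norm_polarCoord_symm, abs_of_pos hρ]
  rw [gaussianMonomial, hnorm, hconj, hz, mul_pow, mul_pow, ← Complex.exp_nat_mul,
    ← Complex.exp_nat_mul, Complex.real_smul]
  push_cast
  rw [show ((a : ℂ) - b) * θ * Complex.I = a * (θ * Complex.I) + b * -(θ * Complex.I) by ring,
    Complex.exp_add]
  ring

theorem integral_gaussianMonomial (hc : 0 < c) (a b : ℕ) :
    ∫ z, gaussianMonomial c a b z =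
      ((if a = b then π * a.factorial / c ^ (a + 1) else 0 : ℝ) : ℂ) := by
  rw [← Complex.integral_comp_polarCoord_symm, polarCoord_target,
    setIntegral_congr_fun (measurableSet_Ioi.prod measurableSet_Ioo)
      fun p hp => smul_gaussianMonomial_polarCoord_symm a b hp.1 p.2,
    Measure.volume_eq_prod,
    setIntegral_prod_mul (fun ρ : ℝ => ((ρ ^ (a + b + 1) * rexp (-c * ρ ^ 2) : ℝ) : ℂ))
      fun θ : ℝ => Complex.exp (((a - b : ℤ) : ℂ) * θ * Complex.I),
    integral_complex_ofReal, integral_exp_int_mul_I]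
  simp only [sub_eq_zero, Nat.cast_inj]
  split_ifs with hab
  · subst hab
    rw [← two_mul, integral_pow_two_mul_add_one_mul_exp_neg_mul_sq hc]
    push_cast
    field_simp
  · simp

section Multivariate

variable {ι κ : Type*} [Fintype ι]

lemma integral_prod_gaussianMonomial (hc : 0 < c) (a b : ι → ℕ) :
    ∫ z : ι → ℂ, ∏ i, gaussianMonomial c (a i) (b i) (z i) =
      ∏ i, ((if a i = b i then π * (a i).factorial / c ^ (a i + 1) else 0 : ℝ) : ℂ) := by
  rw [volume_pi, integral_fintype_prod_eq_prod (fun i => gaussianMonomial c (a i) (b i))]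
  simp only [integral_gaussianMonomial hc]

lemma integrable_prod_gaussianMonomial (hc : 0 < c) (a b : ι → ℕ) :
    Integrable fun z : ι → ℂ => ∏ i, gaussianMonomial c (a i) (b i) (z i) :=
  Integrable.fintype_prod fun i => integrable_gaussianMonomial hc (a i) (b i)

lemma norm_sq_sum_monomial_mul_exp (s : Finset κ) (w : κ → ℂ) (α : κ → ι → ℕ)
    (z : ι → ℂ) :
    ((‖∑ j ∈ s, w j * ∏ i, z i ^ α j i‖ ^ 2 * rexp (-c * ∑ i, ‖z i‖ ^ 2) : ℝ) : ℂ) =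
      ∑ j ∈ s, ∑ k ∈ s, w j * conj (w k) * ∏ i, gaussianMonomial c (α j i) (α k i) (z i) := by
  rw [Complex.ofReal_mul, Complex.sq_norm, ← Complex.mul_conj, mul_sum, exp_sum,
    Complex.ofReal_prod, map_sum, sum_mul_sum, sum_mul]
  simp only [sum_mul]
  refine sum_congr rfl fun j _ => sum_congr rfl fun k _ => ?_
  simp only [gaussianMonomial, prod_mul_distrib, map_mul, map_prod, map_pow]
  ring

theorem integral_norm_sq_sum_monomial_mul_exp (hc : 0 < c) {s : Finset κ} (w : κ → ℂ)
    {α : κ → ι → ℕ} (hα : Set.InjOn α s) :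
    ∫ z : ι → ℂ, ‖∑ j ∈ s, w j * ∏ i, z i ^ α j i‖ ^ 2 * rexp (-c * ∑ i, ‖z i‖ ^ 2) =
      ∑ j ∈ s, ‖w j‖ ^ 2 * ∏ i, π * (α j i).factorial / c ^ (α j i + 1) := by
  apply Complex.ofReal_injective
  rw [← integral_complex_ofReal]
  simp_rw [norm_sq_sum_monomial_mul_exp]
  have hint : ∀ j k, Integrable fun z : ι → ℂ =>
      w j * conj (w k) * ∏ i, gaussianMonomial c (α j i) (α k i) (z i) := fun j k =>
    (integrable_prod_gaussianMonomial hc _ _).const_mul _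
  rw [integral_finsetSum _ fun j _ => integrable_finsetSum _ fun k _ => hint j k]
  simp only [integral_finsetSum _ fun k _ => hint _ k, integral_const_mul,
    integral_prod_gaussianMonomial hc]
  push_cast
  refine sum_congr rfl fun j hj => ?_
  rw [sum_eq_single_of_mem j hj fun k hk hkj => ?_]
  · simp [Complex.mul_conj, Complex.normSq_eq_norm_sq]
  · obtain ⟨i, hi⟩ := Function.ne_iff.1 (hα.ne hk hj hkj)
    rw [prod_eq_zero (mem_univ i) (by rw [if_neg hi.symm, Complex.ofReal_zero]), mul_zero]

end Multivariate

lemma sum_choose_sq_mul_factorial_mul_succ (r m : ℕ) :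
    (∑ j ∈ range (m + 1),
        m.choose j ^ 2 * ((r + j).factorial * (m - j).factorial ^ 2 * j.factorial)) * (r + 1) =
      m.factorial * (r + m + 1).factorial := by
  have hterm : ∀ j ∈ range (m + 1),
      m.choose j ^ 2 * ((r + j).factorial * (m - j).factorial ^ 2 * j.factorial) =
        m.factorial ^ 2 * r.factorial * (j + r).choose r := by
    intro j hj
    rw [← Nat.choose_mul_factorial_mul_factorial (Nat.lt_succ_iff.1 (mem_range.1 hj)),
      add_comm r j, ← Nat.add_choose_mul_factorial_mul_factorial j r]
    ring
  rw [sum_congr rfl hterm, ← mul_sum, Nat.sum_range_add_choose, add_assoc m r 1,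
    add_right_comm r m 1, add_comm (r + 1) m,
    ← Nat.add_choose_mul_factorial_mul_factorial m (r + 1), Nat.factorial_succ]
  ring

lemma prod_pi_mul_factorial_div_pow {ι : Type*} (s : Finset ι) (a : ι → ℕ) :
    ∏ i ∈ s, π * (a i).factorial / π ^ (a i + 1) =
      (∏ i ∈ s, ((a i).factorial : ℝ)) / π ^ ∑ i ∈ s, a i := by
  rw [← prod_pow_eq_pow_sum, ← prod_div_distrib]
  refine prod_congr rfl fun i _ => ?_
  rw [pow_succ]
  field_simp

lemma pow_mul_sub_mul_pow_eq_sum (r m : ℕ) (z : Fin 4 → ℂ) :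
    z 0 ^ r * (z 0 * z 3 - z 1 * z 2) ^ m =
      ∑ j ∈ range (m + 1),
        ((-1) ^ (j + m) * m.choose j : ℂ) * ∏ i, z i ^ ![r + j, m - j, m - j, j] i := by
  rw [sub_pow, mul_sum]
  refine sum_congr rfl fun j _ => ?_
  simp only [Fin.prod_univ_four, Matrix.cons_val]
  ring

lemma norm_sq_mul_prod_pi_mul_factorial_div_pow (r : ℕ) {m j : ℕ} (hj : j ≤ m) :
    ‖((-1) ^ (j + m) * m.choose j : ℂ)‖ ^ 2 *
        ∏ i, π * (![r + j, m - j, m - j, j] i).factorial / π ^ (![r + j, m - j, m - j, j] i + 1) =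
      (m.choose j ^ 2 * ((r + j).factorial * (m - j).factorial ^ 2 * j.factorial) : ℕ) /
        π ^ (r + 2 * m) := by
  have hdeg : r + j + (m - j) + (m - j) + j = r + 2 * m := by omega
  rw [prod_pi_mul_factorial_div_pow]
  simp only [Fin.prod_univ_four, Fin.sum_univ_four, Matrix.cons_val, hdeg, norm_mul, norm_pow,
    norm_neg, norm_one, one_pow, one_mul, RCLike.norm_natCast]
  push_cast
  ring

/-- The squared Fock-space norm of the joint harmonic polynomial
`φ = z₁^r (z₁z₄ − z₂z₃)^m`:
`∫_{ℂ⁴} |z₁^r (z₁z₄ − z₂z₃)^m|² e^{−π(|z₁|²+|z₂|²+|z₃|²+|z₄|²)} dz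
  = m!(r+m+1)!/((r+1)π^{r+2m})`. -/
theorem stmt_6 (r m : ℕ) :
    ∫ z : Fin 4 → ℂ,
        ‖(z 0) ^ r * (z 0 * z 3 - z 1 * z 2) ^ m‖ ^ 2 *
          Real.exp (-Real.pi * (‖z 0‖ ^ 2 + ‖z 1‖ ^ 2 +
            ‖z 2‖ ^ 2 + ‖z 3‖ ^ 2))
      = (m.factorial : ℝ) * ((r + m + 1).factorial : ℝ) /
          (((r : ℝ) + 1) * Real.pi ^ (r + 2 * m)) := by
  have hinj : Set.InjOn (fun j : ℕ => ![r + j, m - j, m - j, j]) (range (m + 1)) :=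
    fun j _ k _ h => congrFun h 3
  simp_rw [pow_mul_sub_mul_pow_eq_sum r m,
    fun z : Fin 4 → ℂ => (Fin.sum_univ_four fun i => ‖z i‖ ^ 2).symm]
  rw [integral_norm_sq_sum_monomial_mul_exp pi_pos _ hinj,
    sum_congr rfl fun j hj => norm_sq_mul_prod_pi_mul_factorial_div_pow r
      (Nat.lt_succ_iff.1 (mem_range.1 hj)),
    ← sum_div, ← Nat.cast_sum, div_eq_div_iff (by positivity) (by positivity), ← mul_assoc]
  congr 1
  exact_mod_cast sum_choose_sq_mul_factorial_mul_succ r m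
end

section
/- Let r ≥ 0 and s be integers, and for 0 ≤ i ≤ r define c_i(t) = (−1)^i · binom(r,i) · (cosh t)^{−i−s}, with the convention c_{−1} ≡ 0. Then for every t > 0 and every i with 0 ≤ i ≤ r, the functions c_i satisfy both of the following equations: (i) −(1/2)·c_i'(t) − ((i+s)/2)·tanh(t)·c_i(t) + i·coth(t)·c_i(t) + (r−i+1)·(sinh t)^{−1}·c_{i−1}(t) = 0; and (ii) i·[ (1/2)·c_i'(t) + ((i+s)/2)·tanh(t)·c_i(t) + (r+1−i)·coth(t)·c_i(t) ] + (r+1−i)²·(sinh t)^{−1}·c_{i−1}(t) = 0. -/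
/-!
Write `c_i(t) = a_i (cosh t)^{-i-s}` with `a_i = (-1)^i C(r, i)` (and `a_i = 0` outside `[0, r]`).
The derivative term `c_i'/2` cancels the `tanh` term exactly, so both equations reduce to multiples
of `(cosh t)^{1-i-s} / sinh t · (i a_i + (r + 1 - i) a_{i-1})`, which vanishes by the binomial
recurrence `(k + 1) C(r, k + 1) = (r - k) C(r, k)`, the signs `(-1)^i` alternating.
-/

open Real

theorem Nat.cast_succ_mul_choose_succ {R : Type*} [CommRing R] (r k : ℕ) :
    ((k : R) + 1) * r.choose (k + 1) = ((r : R) - k) * r.choose k := by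
  rcases le_or_gt k r with hkr | hrk
  · have h := congrArg (Nat.cast : ℕ → R) (Nat.choose_succ_right_eq r k)
    push_cast [Nat.cast_sub hkr] at h
    linear_combination h
  · simp [Nat.choose_eq_zero_of_lt hrk, Nat.choose_eq_zero_of_lt (Nat.lt_succ_of_lt hrk)]

noncomputable def signedChoose (r : ℕ) : ℤ → ℝ
  | (n : ℕ) => (-1) ^ n * r.choose n
  | Int.negSucc _ => 0

theorem signedChoose_natCast (r n : ℕ) : signedChoose r n = (-1) ^ n * r.choose n := rfl

theorem signedChoose_negSucc (r n : ℕ) : signedChoose r (Int.negSucc n) = 0 := rfl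

theorem signedChoose_eq_ite (r : ℕ) (i : ℤ) :
    signedChoose r i =
      if 0 ≤ i ∧ i ≤ (r : ℤ) then (-1 : ℝ) ^ i.toNat * (r.choose i.toNat : ℝ) else 0 := by
  rcases i with n | n
  · by_cases hnr : n ≤ r
    · simp [signedChoose_natCast, hnr]
    · simp [signedChoose_natCast, hnr, Nat.choose_eq_zero_of_lt (not_le.mp hnr)]
  · simp [signedChoose_negSucc]

theorem signedChoose_recurrence (r : ℕ) (i : ℤ) :
    (i : ℝ) * signedChoose r i + ((r : ℝ) + 1 - i) * signedChoose r (i - 1) = 0 := by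
  rcases i with (_ | k) | k
  · rw [show Int.ofNat 0 - 1 = Int.negSucc 0 from rfl, signedChoose_negSucc]
    ring
  · rw [Int.ofNat_eq_natCast, show ((k + 1 : ℕ) : ℤ) - 1 = k by lia, signedChoose_natCast,
      signedChoose_natCast]
    push_cast
    linear_combination -(-1 : ℝ) ^ k * Nat.cast_succ_mul_choose_succ (R := ℝ) r k
  · rw [show Int.negSucc k - 1 = Int.negSucc (k + 1) from rfl, signedChoose_negSucc,
      signedChoose_negSucc]
    ring

theorem deriv_const_mul_cosh_zpow (a : ℝ) (m : ℤ) (t : ℝ) :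
    deriv (fun u => a * cosh u ^ m) t = a * (m * cosh t ^ (m - 1) * sinh t) :=
  (((hasDerivAt_zpow m (cosh t) (Or.inl (cosh_pos t).ne')).comp t
    (hasDerivAt_cosh t)).const_mul a).deriv

theorem radial_equations_of_recurrence {a a' x C S i s r : ℝ} (hC : C ≠ 0) (hS : S ≠ 0)
    (hrec : i * a + (r + 1 - i) * a' = 0) :
    (-(1 / 2) * (a * ((-i - s) * x * S)) - (i + s) / 2 * (S / C) * (a * (x * C))
        + i * (C / S) * (a * (x * C)) + (r - i + 1) * S⁻¹ * (a' * (x * C ^ 2)) = 0) ∧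
      (i * ((1 / 2) * (a * ((-i - s) * x * S)) + (i + s) / 2 * (S / C) * (a * (x * C))
        + (r + 1 - i) * (C / S) * (a * (x * C))) + (r + 1 - i) ^ 2 * S⁻¹ * (a' * (x * C ^ 2)) = 0) := by
  constructor
  · field_simp
    linear_combination 2 * x * C ^ 2 * hrec
  · field_simp
    linear_combination 2 * (r + 1 - i) * x * C ^ 2 * hrec

/-- The radial Schmid-operator equations for the holomorphic discrete series of
`SU(2,1)`: the functions `c_i(t) = (−1)^i C(r,i) (cosh t)^{−i−s}` (for `0 ≤ i ≤ r`,
with `c_{−1} ≡ 0`) satisfy `P⁺_τ∘∇ᴸ₋φ = 0` and `P⁻_τ∘∇ᴸ₋φ = 0`. -/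
theorem stmt_9 (r : ℕ) (s : ℤ) (c : ℤ → ℝ → ℝ)
    (hc : ∀ i : ℤ, ∀ t : ℝ,
      c i t = if 0 ≤ i ∧ i ≤ (r : ℤ) then
        (-1 : ℝ) ^ i.toNat * (r.choose i.toNat : ℝ) * Real.cosh t ^ (-i - s) else 0) :
    ∀ t : ℝ, 0 < t → ∀ i : ℤ, 0 ≤ i → i ≤ (r : ℤ) →
      (-(1 / 2) * deriv (c i) t - ((i : ℝ) + (s : ℝ)) / 2 * Real.tanh t * c i t
          + (i : ℝ) * (Real.cosh t / Real.sinh t) * c i t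
          + ((r : ℝ) - (i : ℝ) + 1) * (Real.sinh t)⁻¹ * c (i - 1) t = 0) ∧
      ((i : ℝ) * ((1 / 2) * deriv (c i) t + ((i : ℝ) + (s : ℝ)) / 2 * Real.tanh t * c i t
          + ((r : ℝ) + 1 - (i : ℝ)) * (Real.cosh t / Real.sinh t) * c i t)
          + ((r : ℝ) + 1 - (i : ℝ)) ^ 2 * (Real.sinh t)⁻¹ * c (i - 1) t = 0) := by
  intro t ht i _ _
  have hC : cosh t ≠ 0 := (cosh_pos t).ne'
  have hS : sinh t ≠ 0 := (sinh_pos_iff.mpr ht).ne'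
  have hc_eq : ∀ j, c j = fun u => signedChoose r j * cosh u ^ (-j - s) := fun j => by
    funext u
    rw [hc, signedChoose_eq_ite]
    split_ifs <;> simp
  have hpow₁ : cosh t ^ (-i - s) = cosh t ^ (-i - s - 1) * cosh t := by
    rw [← zpow_add_one₀ hC, sub_add_cancel]
  have hpow₂ : cosh t ^ (-(i - 1) - s) = cosh t ^ (-i - s - 1) * cosh t ^ 2 := by
    rw [← zpow_natCast, ← zpow_add₀ hC]
    congr 1
    push_cast
    ring
  simp only [hc_eq]
  rw [deriv_const_mul_cosh_zpow, hpow₁, hpow₂, tanh_eq_sinh_div_cosh]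
  push_cast
  exact radial_equations_of_recurrence hC hS (signedChoose_recurrence r i)
end

section
/- Let r ≥ 0 and s be integers, and for 0 ≤ i ≤ r define c_i(t) = (−1)^i · binom(r,i) · (cosh t)^{i+s}, with the convention c_{r+1} ≡ 0. Then for every t > 0 and every i with 0 ≤ i ≤ r, the functions c_i satisfy both of the following equations: (i) −(1/2)·c_i'(t) + ((i+s)/2)·tanh(t)·c_i(t) + (r−i)·coth(t)·c_i(t) + (i+1)·(sinh t)^{−1}·c_{i+1}(t) = 0; and (ii) (r−i)·[ (1/2)·c_i'(t) − ((i+s)/2)·tanh(t)·c_i(t) + (i+1)·coth(t)·c_i(t) ] + (i+1)²·(sinh t)^{−1}·c_{i+1}(t) = 0. -/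
/-! Every `c_i` is a constant multiple of `cosh^(i+s)`, so `c_i' = (i+s) tanh · c_i` and the
derivative terms cancel in both equations. What remains is `(r-i) coth · c_i + (i+1) c_{i+1} / sinh`
(times `i+1` in the second equation), which vanishes by the binomial recurrence
`(i+1) binom(r,i+1) = (r-i) binom(r,i)`: it gives `(i+1) c_{i+1} = -(r-i) cosh · c_i`. -/

open Real

theorem hasDerivAt_cosh_zpow (m : ℤ) (t : ℝ) :
    HasDerivAt (fun u => cosh u ^ m) (m * tanh t * cosh t ^ m) t := by
  have hcosh : cosh t ≠ 0 := (cosh_pos t).ne'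
  refine ((hasDerivAt_zpow m (cosh t) (Or.inl hcosh)).comp t (hasDerivAt_cosh t)).congr_deriv ?_
  rw [zpow_sub_one₀ hcosh, tanh_eq_sinh_div_cosh]
  ring

noncomputable def schmidCoeff (r : ℕ) (s i : ℤ) (t : ℝ) : ℝ :=
  if 0 ≤ i ∧ i ≤ (r : ℤ) then (-1 : ℝ) ^ i.toNat * (r.choose i.toNat : ℝ) * cosh t ^ (i + s)
  else 0

theorem hasDerivAt_schmidCoeff (r : ℕ) (s i : ℤ) (t : ℝ) :
    HasDerivAt (schmidCoeff r s i) (((i : ℝ) + s) * tanh t * schmidCoeff r s i t) t := by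
  unfold schmidCoeff
  by_cases h : 0 ≤ i ∧ i ≤ (r : ℤ)
  · simp only [h, and_self, if_true]
    refine ((hasDerivAt_cosh_zpow (i + s) t).const_mul
      ((-1 : ℝ) ^ i.toNat * (r.choose i.toNat : ℝ))).congr_deriv ?_
    push_cast
    ring
  · simp only [h, if_false, mul_zero]
    exact hasDerivAt_const t 0

theorem succ_mul_schmidCoeff_succ (r : ℕ) (s : ℤ) (n : ℕ) (t : ℝ) :
    ((n : ℝ) + 1) * schmidCoeff r s (n + 1) t = -((r : ℝ) - n) * cosh t * schmidCoeff r s n t := by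
  rcases lt_or_ge n r with hlt | hge
  · have hchoose : (r.choose (n + 1) : ℝ) * ((n : ℝ) + 1) = r.choose n * ((r : ℝ) - n) := by
      have h := congrArg (Nat.cast : ℕ → ℝ) (Nat.choose_succ_right_eq r n)
      push_cast [Nat.cast_sub hlt.le] at h
      exact h
    have hzpow : cosh t ^ ((n : ℤ) + 1 + s) = cosh t ^ ((n : ℤ) + s) * cosh t := by
      rw [← zpow_add_one₀ (cosh_pos t).ne', add_right_comm]
    rw [schmidCoeff, schmidCoeff, if_pos (by omega), if_pos (by omega), hzpow,
      show ((n : ℤ) + 1).toNat = n + 1 by omega, Int.toNat_natCast, pow_succ]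
    linear_combination (-(-1 : ℝ) ^ n * cosh t ^ ((n : ℤ) + s) * cosh t) * hchoose
  · have hnext : schmidCoeff r s (n + 1) t = 0 := by
      simp only [schmidCoeff, show ¬((0 : ℤ) ≤ n + 1 ∧ (n : ℤ) + 1 ≤ r) by omega, if_false]
    rcases hge.eq_or_lt with rfl | hgt
    · simp [hnext]
    · rw [hnext, schmidCoeff, if_neg (by omega)]
      simp

theorem schmid_equations_of_recurrence {a b k d c₀ c₁ t : ℝ}
    (hd : d = a * tanh t * c₀) (hrec : (k + 1) * c₁ = -b * cosh t * c₀) :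
    (-(1 / 2) * d + a / 2 * tanh t * c₀ + b * (cosh t / sinh t) * c₀
        + (k + 1) * (sinh t)⁻¹ * c₁ = 0) ∧
      (b * ((1 / 2) * d - a / 2 * tanh t * c₀ + (k + 1) * (cosh t / sinh t) * c₀)
        + (k + 1) ^ 2 * (sinh t)⁻¹ * c₁ = 0) := by
  subst hd
  exact ⟨by linear_combination (sinh t)⁻¹ * hrec,
    by linear_combination (k + 1) * (sinh t)⁻¹ * hrec⟩

/-- The radial Schmid-operator equations for the antiholomorphic discrete series of
`SU(2,1)`: the functions `c_i(t) = (−1)^i C(r,i) (cosh t)^{i+s}` (for `0 ≤ i ≤ r`,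
with `c_{r+1} ≡ 0`) satisfy `P⁺_τ∘∇ᴸ₊φ = 0` and `P⁻_τ∘∇ᴸ₊φ = 0`. -/
theorem stmt_10 (r : ℕ) (s : ℤ) (c : ℤ → ℝ → ℝ)
    (hc : ∀ i : ℤ, ∀ t : ℝ,
      c i t = if 0 ≤ i ∧ i ≤ (r : ℤ) then
        (-1 : ℝ) ^ i.toNat * (r.choose i.toNat : ℝ) * Real.cosh t ^ (i + s) else 0) :
    ∀ t : ℝ, 0 < t → ∀ i : ℤ, 0 ≤ i → i ≤ (r : ℤ) →
      (-(1 / 2) * deriv (c i) t + ((i : ℝ) + (s : ℝ)) / 2 * Real.tanh t * c i t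
          + ((r : ℝ) - (i : ℝ)) * (Real.cosh t / Real.sinh t) * c i t
          + ((i : ℝ) + 1) * (Real.sinh t)⁻¹ * c (i + 1) t = 0) ∧
      (((r : ℝ) - (i : ℝ)) * ((1 / 2) * deriv (c i) t
          - ((i : ℝ) + (s : ℝ)) / 2 * Real.tanh t * c i t
          + ((i : ℝ) + 1) * (Real.cosh t / Real.sinh t) * c i t)
          + ((i : ℝ) + 1) ^ 2 * (Real.sinh t)⁻¹ * c (i + 1) t = 0) := by
  intro t _ i hi _
  obtain rfl : c = schmidCoeff r s := funext fun i => funext (hc i)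
  lift i to ℕ using hi
  exact schmid_equations_of_recurrence (hasDerivAt_schmidCoeff r s i t).deriv
    (by exact_mod_cast succ_mul_schmidCoeff_succ r s i t)
end

section
/- Let r ≥ 0 and m ≥ 0 be integers, and let s ≤ −1 be an integer with m + s + 1 ≥ 1. Then ∑_{i=0}^{r} ∫_0^1 (1−z)^m · z · F(1+i, 1−s, r+2, z) dz = (r+1) / ((m+1)(m+s+1)), where each integrand is integrable on (0,1). -/
open MeasureTheory

/-- The Gauss hypergeometric series `F(a,b,c,z) = ∑ (a)ₙ(b)ₙ/(n!(c)ₙ) zⁿ`. -/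
noncomputable def hyperF (a b c z : ℂ) : ℂ :=
  ∑' n : ℕ, ((ascPochhammer ℂ n).eval a * (ascPochhammer ℂ n).eval b /
      ((n.factorial : ℂ) * (ascPochhammer ℂ n).eval c)) * z ^ n

section Aux

open Finset Filter

theorem aux_nat_sum (r n : ℕ) :
    (n + 1) * ∑ i ∈ Finset.range (r + 1), (1 + i).ascFactorial n
      = (r + 1) * (r + 2).ascFactorial n := by
  induction r with
  | zero =>
      have h := Nat.factorial_mul_ascFactorial 1 n
      have h2 : (2:ℕ).ascFactorial n = (n+1) * n.factorial := by
        simpa [Nat.factorial_one, Nat.factorial_succ, Nat.add_comm] using h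
      simp [Nat.one_ascFactorial, h2]
  | succ r ih =>
      rw [Finset.sum_range_succ, Nat.mul_add, ih]
      have key : (r + 2) * (r + 3).ascFactorial n = (r + 2 + n) * (r + 2).ascFactorial n :=
        Nat.succ_ascFactorial (r + 2) n
      have h1 : 1 + (r+1) = r + 2 := by omega
      rw [h1]
      nlinarith [key]

noncomputable def Cc (r k i n : ℕ) : ℝ :=
  ((1 + i).ascFactorial n * (k + 2).ascFactorial n : ℕ) /
    ((n.factorial * (r + 2).ascFactorial n : ℕ))

theorem Cc_nonneg (r k i n : ℕ) : 0 ≤ Cc r k i n := by unfold Cc; positivity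

noncomputable def betav (m n : ℕ) : ℝ :=
  (m.factorial * (n + 1).factorial : ℕ) / ((m + n + 2).factorial : ℕ)

theorem betav_nonneg (m n : ℕ) : 0 ≤ betav m n := by unfold betav; positivity

noncomputable def uu (k m n : ℕ) : ℝ :=
  ((k + n + 1).factorial : ℕ) / ((m + n + 2).factorial : ℕ)

theorem uu_nonneg (k m n : ℕ) : 0 ≤ uu k m n := by unfold uu; positivity

theorem aux_sum_i (r m k n : ℕ) :
    ∑ i ∈ Finset.range (r + 1), Cc r k i n * betav m n
      = ((r : ℝ) + 1) * m.factorial / (k + 1).factorial * uu k m n := by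
  have h1 : ((n:ℝ) + 1) * ∑ i ∈ Finset.range (r + 1), ((1 + i).ascFactorial n : ℝ)
      = ((r : ℝ) + 1) * ((r + 2).ascFactorial n : ℝ) := by
    have := congrArg (fun x : ℕ => (x : ℝ)) (aux_nat_sum r n)
    push_cast at this
    convert this using 2 <;> ring
  have h2 : ((k + 1).factorial : ℝ) * ((k + 2).ascFactorial n : ℝ)
      = ((k + n + 1).factorial : ℝ) := by
    rw [show k + n + 1 = k + 1 + n from by omega]
    exact_mod_cast congrArg (fun x : ℕ => (x : ℝ)) (Nat.factorial_mul_ascFactorial (k+1) n)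
  have h3 : ((n+1).factorial : ℝ) = ((n:ℝ)+1) * (n.factorial : ℝ) := by
    rw [Nat.factorial_succ]; push_cast; ring
  have hfn : (0:ℝ) < (n.factorial : ℝ) := by positivity
  have hfm : (0:ℝ) < (m.factorial : ℝ) := by positivity
  have hfk : (0:ℝ) < ((k+1).factorial : ℝ) := by positivity
  have hfmn : (0:ℝ) < ((m+n+2).factorial : ℝ) := by positivity
  have hascr : (0:ℝ) < ((r + 2).ascFactorial n : ℝ) := by
    exact_mod_cast Nat.ascFactorial_pos (r+1) n
  unfold Cc betav uu
  have hterm : ∀ x ∈ Finset.range (r+1), (((1 + x).ascFactorial n * (k + 2).ascFactorial n : ℕ) : ℝ) /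
      ((n.factorial * (r + 2).ascFactorial n : ℕ) : ℝ) *
      (((m.factorial * (n + 1).factorial : ℕ) : ℝ) / (((m + n + 2).factorial : ℕ) : ℝ))
      = ((1 + x).ascFactorial n : ℝ) * (((k + 2).ascFactorial n : ℝ) * (m.factorial : ℝ)
        * ((n+1).factorial : ℝ) / ((n.factorial : ℝ) * ((r + 2).ascFactorial n : ℝ)
        * ((m + n + 2).factorial : ℝ))) := by
    intro x _
    push_cast
    ring
  rw [Finset.sum_congr rfl hterm, ← Finset.sum_mul]
  set S : ℝ := ∑ i ∈ Finset.range (r + 1), ((1 + i).ascFactorial n : ℝ) with hS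
  field_simp
  linear_combination (((k+2).ascFactorial n : ℝ) * ((k+1).factorial) * S) * h3
    + ((n.factorial : ℝ) * ((k+2).ascFactorial n) * ((k+1).factorial)) * h1
    + (((r:ℝ)+1) * ((r+2).ascFactorial n) * (n.factorial)) * h2

noncomputable def gg (k m n : ℕ) : ℝ :=
  ((k + n + 1).factorial : ℕ) / ((m + n + 1).factorial : ℕ)

theorem fac_step (a : ℕ) : ((a+1).factorial : ℝ) = ((a:ℝ) + 1) * (a.factorial : ℝ) := by
  rw [Nat.factorial_succ]; push_cast; ring

theorem gg_sub (k m n : ℕ) : gg k m n - gg k m (n+1) = ((m:ℝ) - k) * uu k m n := by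
  have hf1 : ((m+n+2).factorial : ℝ) = ((m:ℝ)+(n:ℝ)+2) * ((m+n+1).factorial : ℝ) := by
    have := fac_step (m+n+1); rw [show m+n+1+1 = m+n+2 from rfl] at this
    rw [this]; push_cast; ring
  have hf2 : ((k+(n+1)+1).factorial : ℝ) = ((k:ℝ)+(n:ℝ)+2) * ((k+n+1).factorial : ℝ) := by
    have := fac_step (k+n+1); rw [show k+n+1+1 = k+(n+1)+1 from by omega] at this
    rw [this]; push_cast; ring
  have hf3 : (m+(n+1)+1) = (m+n+2) := by omega
  have h : (0:ℝ) < ((m+n+1).factorial : ℝ) := by positivity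
  have h2 : (0:ℝ) < ((m+n+2).factorial : ℝ) := by positivity
  unfold gg uu
  rw [hf2, hf3, hf1]
  field_simp
  ring

theorem gg_nonneg (k m n : ℕ) : 0 ≤ gg k m n := by unfold gg; positivity

theorem gg_le (k m n : ℕ) (hmk : k + 1 ≤ m) : gg k m n ≤ 1 / ((n:ℝ) + 1) := by
  unfold gg
  rw [div_le_div_iff₀ (by positivity) (by positivity)]
  have h1 : (k + n + 2).factorial ≤ (m + n + 1).factorial :=
    Nat.factorial_le (by omega)
  have h2 : ((k+n+1).factorial : ℝ) * ((n:ℝ)+1) ≤ ((k+n+1).factorial : ℝ) * ((k:ℝ)+n+2) := by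
    apply mul_le_mul_of_nonneg_left _ (by positivity)
    push_cast; linarith
  calc ((k+n+1).factorial : ℝ) * ((n:ℝ)+1) ≤ ((k+n+1).factorial : ℝ) * ((k:ℝ)+n+2) := h2
    _ = ((k+n+2).factorial : ℝ) := by
        rw [show k+n+2 = (k+n+1)+1 from rfl, fac_step (k+n+1)]; push_cast; ring
    _ ≤ ((m+n+1).factorial : ℝ) := by exact_mod_cast h1
    _ = 1 * ((m+n+1).factorial : ℝ) := by ring

theorem gg_tendsto (k m : ℕ) (hmk : k + 1 ≤ m) :
    Tendsto (fun n => gg k m n) atTop (nhds 0) := by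
  apply squeeze_zero (fun n => gg_nonneg k m n) (fun n => gg_le k m n hmk)
  exact tendsto_one_div_add_atTop_nhds_zero_nat

theorem uu_partial (k m : ℕ) (hmk : k + 1 ≤ m) (N : ℕ) :
    ∑ n ∈ Finset.range N, uu k m n = (gg k m 0 - gg k m N) / ((m:ℝ) - k) := by
  have hmk' : (0:ℝ) < (m:ℝ) - k := by
    have : (k:ℝ) + 1 ≤ m := by exact_mod_cast hmk
    linarith
  rw [eq_div_iff (ne_of_gt hmk'), Finset.sum_mul, ← Finset.sum_range_sub' (fun n => gg k m n) N]
  apply Finset.sum_congr rfl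
  intro n _
  rw [gg_sub]; ring

theorem uu_summable (k m : ℕ) (hmk : k + 1 ≤ m) : Summable (uu k m) := by
  have hmk' : (0:ℝ) < (m:ℝ) - k := by
    have : (k:ℝ) + 1 ≤ m := by exact_mod_cast hmk
    linarith
  apply summable_of_sum_range_le (c := gg k m 0 / ((m:ℝ) - k)) (uu_nonneg k m)
  intro N
  rw [uu_partial k m hmk N]
  have hgN : 0 ≤ gg k m N := gg_nonneg k m N
  apply div_le_div_of_nonneg_right ?_ hmk'.le
  linarith

theorem uu_tsum (k m : ℕ) (hmk : k + 1 ≤ m) :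
    ∑' n, uu k m n = ((k+1).factorial : ℝ) / (((m:ℝ) - k) * ((m+1).factorial : ℝ)) := by
  have hmk' : (0:ℝ) < (m:ℝ) - k := by
    have : (k:ℝ) + 1 ≤ m := by exact_mod_cast hmk
    linarith
  have hsum := (uu_summable k m hmk).hasSum.tendsto_sum_nat
  have h2 : Tendsto (fun N => (gg k m 0 - gg k m N) / ((m:ℝ) - k)) atTop
      (nhds ((gg k m 0 - 0) / ((m:ℝ) - k))) :=
    (Tendsto.sub tendsto_const_nhds (gg_tendsto k m hmk)).div_const _
  have h3 : Tendsto (fun N => ∑ n ∈ Finset.range N, uu k m n) atTop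
      (nhds ((gg k m 0 - 0) / ((m:ℝ) - k))) := by
    apply h2.congr
    intro N
    rw [uu_partial k m hmk N]
  have heq := tendsto_nhds_unique hsum h3
  rw [heq, sub_zero]
  unfold gg
  rw [show k+0+1 = k+1 from rfl, show m+0+1 = m+1 from rfl, div_div, mul_comm ((m:ℝ)-(k:ℝ))]

theorem aux_nat_bound (r k i n : ℕ) :
    (1 + i).ascFactorial n * (k + 2).ascFactorial n
      ≤ (n.factorial * (r + 2).ascFactorial n) *
        (((n+1)*(1+i))^i * ((n+1)*(k+2))^(k+1)) := by
  have b1 : (1 + i).ascFactorial n ≤ n.factorial * ((n+1)*(1+i))^i := by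
    have e : i.factorial * (1+i).ascFactorial n = n.factorial * (n+1).ascFactorial i := by
      rw [show 1 + i = i + 1 from by omega, Nat.factorial_mul_ascFactorial i n,
        Nat.factorial_mul_ascFactorial n i, show i + n = n + i from by omega]
    have h1 : (1+i).ascFactorial n ≤ i.factorial * (1+i).ascFactorial n :=
      Nat.le_mul_of_pos_left _ i.factorial_pos
    have h2 : (n+1).ascFactorial i ≤ ((n+1)*(1+i))^i :=
      le_trans (Nat.ascFactorial_le_pow_add n i)
        (Nat.pow_le_pow_left (by nlinarith) i)
    calc (1+i).ascFactorial n ≤ n.factorial * (n+1).ascFactorial i := by rw [← e]; exact h1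
      _ ≤ n.factorial * ((n+1)*(1+i))^i := Nat.mul_le_mul_left _ h2
  have b2 : (k + 2).ascFactorial n ≤ n.factorial * ((n+1)*(k+2))^(k+1) := by
    have e : (k+1).factorial * (k+2).ascFactorial n = n.factorial * (n+1).ascFactorial (k+1) := by
      rw [Nat.factorial_mul_ascFactorial (k+1) n, Nat.factorial_mul_ascFactorial n (k+1),
        show k + 1 + n = n + (k+1) from by omega]
    have h1 : (k+2).ascFactorial n ≤ (k+1).factorial * (k+2).ascFactorial n :=
      Nat.le_mul_of_pos_left _ (k+1).factorial_pos
    have h2 : (n+1).ascFactorial (k+1) ≤ ((n+1)*(k+2))^(k+1) :=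
      le_trans (Nat.ascFactorial_le_pow_add n (k+1))
        (Nat.pow_le_pow_left (by nlinarith) (k+1))
    calc (k+2).ascFactorial n ≤ n.factorial * (n+1).ascFactorial (k+1) := by rw [← e]; exact h1
      _ ≤ n.factorial * ((n+1)*(k+2))^(k+1) := Nat.mul_le_mul_left _ h2
  have b3 : n.factorial ≤ (r + 2).ascFactorial n := by
    have hd : n.factorial * (r+1).factorial ∣ (n + (r+1)).factorial :=
      Nat.factorial_mul_factorial_dvd_factorial_add n (r+1)
    have h1 : n.factorial * (r+1).factorial ≤ (n + (r+1)).factorial :=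
      Nat.le_of_dvd (Nat.factorial_pos _) hd
    have h2 : (r+1).factorial * (r+2).ascFactorial n = (r + 1 + n).factorial :=
      Nat.factorial_mul_ascFactorial (r+1) n
    have h3 : n.factorial * (r+1).factorial ≤ (r+1).factorial * (r+2).ascFactorial n := by
      rw [h2, show r + 1 + n = n + (r+1) from by omega]; exact h1
    have h4 : (r+1).factorial * n.factorial ≤ (r+1).factorial * (r+2).ascFactorial n := by
      rwa [Nat.mul_comm] at h3
    exact Nat.le_of_mul_le_mul_left h4 (r+1).factorial_pos
  calc (1 + i).ascFactorial n * (k + 2).ascFactorial n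
      ≤ (n.factorial * ((n+1)*(1+i))^i) * (n.factorial * ((n+1)*(k+2))^(k+1)) :=
        Nat.mul_le_mul b1 b2
    _ = (n.factorial * n.factorial) * (((n+1)*(1+i))^i * ((n+1)*(k+2))^(k+1)) := by ring
    _ ≤ (n.factorial * (r + 2).ascFactorial n) * (((n+1)*(1+i))^i * ((n+1)*(k+2))^(k+1)) :=
        Nat.mul_le_mul_right _ (Nat.mul_le_mul_left _ b3)

theorem Cc_le (r k i n : ℕ) :
    Cc r k i n ≤ (((1:ℝ)+i)^i * ((k:ℝ)+2)^(k+1)) * ((n:ℝ)+1)^(i+k+1) := by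
  unfold Cc
  rw [div_le_iff₀ (by positivity)]
  have := aux_nat_bound r k i n
  have hc : (((1 + i).ascFactorial n * (k + 2).ascFactorial n : ℕ) : ℝ)
      ≤ (((n.factorial * (r + 2).ascFactorial n) *
        (((n+1)*(1+i))^i * ((n+1)*(k+2))^(k+1)) : ℕ) : ℝ) := by exact_mod_cast this
  calc (((1 + i).ascFactorial n * (k + 2).ascFactorial n : ℕ) : ℝ)
      ≤ _ := hc
    _ = (((1:ℝ)+i)^i * ((k:ℝ)+2)^(k+1)) * ((n:ℝ)+1)^(i+k+1) *
        ((n.factorial * (r + 2).ascFactorial n : ℕ) : ℝ) := by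
        push_cast [mul_pow]
        rw [pow_add]
        ring

theorem summable_Cc_geom (r k i : ℕ) {t : ℝ} (ht0 : 0 < t) (ht1 : t < 1) :
    Summable (fun n => Cc r k i n * t ^ n) := by
  set d := i + k + 1 with hd
  have h1 : Summable (fun n : ℕ => (n:ℝ)^d * t^n) :=
    summable_pow_mul_geometric_of_norm_lt_one d
      (by rw [Real.norm_eq_abs, abs_of_pos ht0]; exact ht1)
  have h2 : Summable (fun n : ℕ => ((n+1:ℕ):ℝ)^d * t^(n+1)) :=
    (summable_nat_add_iff 1).2 h1
  have h3 : Summable (fun n : ℕ => ((n:ℝ)+1)^d * t^n) := by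
    have := h2.mul_left t⁻¹
    apply this.congr
    intro n
    push_cast
    rw [pow_succ]
    field_simp
    ring
  have h4 := h3.mul_left (((1:ℝ)+i)^i * ((k:ℝ)+2)^(k+1))
  apply Summable.of_nonneg_of_le _ _ h4
  · intro n
    have := Cc_nonneg r k i n
    positivity
  · intro n
    have h5 := Cc_le r k i n
    have h6 : (0:ℝ) ≤ t^n := by positivity
    calc Cc r k i n * t^n ≤ ((((1:ℝ)+i)^i * ((k:ℝ)+2)^(k+1)) * ((n:ℝ)+1)^d) * t^n :=
          mul_le_mul_of_nonneg_right h5 h6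
      _ = (((1:ℝ)+i)^i * ((k:ℝ)+2)^(k+1)) * (((n:ℝ)+1)^d * t^n) := by ring

theorem prod_cast_asc (a : ℕ) : ∀ p : ℕ, ∏ j ∈ Finset.range p, ((a:ℂ)+j) = (a.ascFactorial p : ℂ)
  | 0 => by simp
  | p+1 => by
      rw [Finset.prod_range_succ, prod_cast_asc a p, Nat.ascFactorial_succ]
      push_cast
      ring

theorem Ibeta_c (m n : ℕ) :
    ∫ z in Set.Ioo (0:ℝ) 1, ((1-z:ℝ):ℂ)^m * (z:ℂ)^(n+1)
      = ((m.factorial * (n + 1).factorial : ℕ) : ℂ) / (((m + n + 2).factorial : ℕ) : ℂ) := by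
  have h1 : ∫ z in Set.Ioo (0:ℝ) 1, ((1-z:ℝ):ℂ)^m * (z:ℂ)^(n+1)
      = Complex.betaIntegral ((n:ℂ)+2) ((m:ℂ)+1) := by
    rw [Complex.betaIntegral, intervalIntegral.integral_of_le zero_le_one,
      ← MeasureTheory.integral_Ioc_eq_integral_Ioo]
    apply setIntegral_congr_fun measurableSet_Ioc
    intro x _
    have e1 : ((n:ℂ)+2)-1 = ((n+1:ℕ):ℂ) := by push_cast; ring
    have e2 : ((m:ℂ)+1)-1 = ((m:ℕ):ℂ) := by push_cast; ring
    calc ((1-x:ℝ):ℂ)^m * (x:ℂ)^(n+1)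
        = (x:ℂ)^((n+1:ℕ)) * (1-(x:ℂ))^((m:ℕ)) := by push_cast; ring
      _ = (x:ℂ)^(((n+1:ℕ):ℂ)) * (1-(x:ℂ))^(((m:ℕ):ℂ)) := by
          rw [Complex.cpow_natCast, Complex.cpow_natCast]
      _ = (x:ℂ)^(((n:ℂ)+2)-1) * (1-(x:ℂ))^(((m:ℂ)+1)-1) := by rw [e1, e2]
  have h2 := Complex.betaIntegral_eval_nat_add_one_right (u := (n:ℂ)+2)
    (by simp; positivity) m
  have h3 : ∏ j ∈ Finset.range (m+1), ((n:ℂ)+2+j) = (((n+2).ascFactorial (m+1) : ℕ) : ℂ) := by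
    rw [← prod_cast_asc (n+2) (m+1)]
    apply Finset.prod_congr rfl
    intros
    push_cast
    ring
  have h4 : (n+1).factorial * (n+2).ascFactorial (m+1) = (m+n+2).factorial := by
    have := Nat.factorial_mul_ascFactorial (n+1) (m+1)
    rwa [show n+1+(m+1) = m+n+2 from by omega] at this
  rw [h1, h2, h3]
  have hne1 : (((n+2).ascFactorial (m+1) : ℕ) : ℂ) ≠ 0 := by
    exact_mod_cast Nat.cast_ne_zero.mpr (Nat.pos_iff_ne_zero.mp (Nat.ascFactorial_pos (n+1) (m+1)))
  have hne2 : (((m+n+2).factorial : ℕ) : ℂ) ≠ 0 :=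
    Nat.cast_ne_zero.mpr (Nat.factorial_ne_zero _)
  rw [div_eq_div_iff hne1 hne2]
  have h4c : (((n+1).factorial : ℕ) : ℂ) * (((n+2).ascFactorial (m+1) : ℕ) : ℂ)
      = (((m+n+2).factorial : ℕ) : ℂ) := by exact_mod_cast congrArg (Nat.cast : ℕ → ℂ) h4
  push_cast
  push_cast at h4c
  linear_combination (-(m.factorial : ℂ)) * h4c

theorem Ib_int (m j : ℕ) : IntegrableOn (fun z : ℝ => (1-z)^m * z^j) (Set.Ioo 0 1) := by
  have hc : Continuous (fun z : ℝ => (1-z)^m * z^j) := by continuity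
  exact (hc.integrableOn_Icc (a := 0) (b := 1)).mono_set Set.Ioo_subset_Icc_self

theorem Ibeta_r (m n : ℕ) :
    ∫ z in Set.Ioo (0:ℝ) 1, (1-z)^m * z^(n+1) = betav m n := by
  have h0 : ((∫ z in Set.Ioo (0:ℝ) 1, (1-z)^m * z^(n+1) : ℝ) : ℂ)
      = ∫ z in Set.Ioo (0:ℝ) 1, ((1-z:ℝ):ℂ)^m * (z:ℂ)^(n+1) := by
    have e : ∀ x:ℝ, ((1-x:ℝ):ℂ)^m * (x:ℂ)^(n+1) = (((1-x)^m * x^(n+1) : ℝ) : ℂ) := fun x => by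
      push_cast; ring
    calc ((∫ z in Set.Ioo (0:ℝ) 1, (1-z)^m * z^(n+1) : ℝ) : ℂ)
        = ∫ z in Set.Ioo (0:ℝ) 1, (((1-z)^m * z^(n+1) : ℝ) : ℂ) := (integral_ofReal).symm
      _ = ∫ z in Set.Ioo (0:ℝ) 1, ((1-z:ℝ):ℂ)^m * (z:ℂ)^(n+1) := by simp_rw [e]
  have hc := Ibeta_c m n
  rw [← h0] at hc
  unfold betav
  apply Complex.ofReal_injective
  rw [hc]
  push_cast
  ring

/-- The summed real integrand. -/
noncomputable def Gr (r k m i : ℕ) (z : ℝ) : ℝ :=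
  ∑' n, Cc r k i n * ((1-z)^m * z^(n+1))

/-- Sum of values. -/
noncomputable def Vr (r k m i : ℕ) : ℝ := ∑' n, Cc r k i n * betav m n

theorem summable_term (r k m i : ℕ) {z : ℝ} (h0 : 0 < z) (h1 : z < 1) :
    Summable (fun n => Cc r k i n * ((1-z)^m * z^(n+1))) := by
  have := (summable_Cc_geom r k i h0 h1).mul_left ((1-z)^m * z)
  apply this.congr
  intro n
  ring

theorem hasSum_Gr (r k m i : ℕ) {z : ℝ} (h0 : 0 < z) (h1 : z < 1) :
    HasSum (fun n => Cc r k i n * ((1-z)^m * z^(n+1))) (Gr r k m i z) :=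
  (summable_term r k m i h0 h1).hasSum

theorem term_nonneg (r k m i n : ℕ) {z : ℝ} (h0 : 0 < z) (h1 : z < 1) :
    0 ≤ Cc r k i n * ((1-z)^m * z^(n+1)) := by
  have h2 : (0:ℝ) ≤ 1 - z := by linarith
  have := Cc_nonneg r k i n
  positivity

theorem Gr_nonneg (r k m i : ℕ) {z : ℝ} (h0 : 0 < z) (h1 : z < 1) :
    0 ≤ Gr r k m i z :=
  tsum_nonneg (fun n => term_nonneg r k m i n h0 h1)

theorem integrand_ofReal (r k m i : ℕ) (z : ℝ) :
    ((1 - z : ℝ) : ℂ)^m * (z:ℂ) * hyperF (1 + (i:ℂ)) ((k:ℂ)+2) ((r:ℂ) + 2) (z:ℂ)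
      = ((Gr r k m i z : ℝ) : ℂ) := by
  unfold hyperF Gr
  rw [Complex.ofReal_tsum, ← tsum_mul_left]
  apply tsum_congr
  intro n
  have e1 : (ascPochhammer ℂ n).eval (1 + (i:ℂ)) = (((1+i).ascFactorial n : ℕ) : ℂ) := by
    rw [show (1:ℂ) + (i:ℂ) = ((1+i:ℕ):ℂ) from by push_cast; ring,
      ← ascPochhammer_eval_cast, ascPochhammer_nat_eq_ascFactorial]
  have e2 : (ascPochhammer ℂ n).eval ((k:ℂ)+2) = (((k+2).ascFactorial n : ℕ) : ℂ) := by
    rw [show (k:ℂ) + 2 = ((k+2:ℕ):ℂ) from by push_cast; ring,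
      ← ascPochhammer_eval_cast, ascPochhammer_nat_eq_ascFactorial]
  have e3 : (ascPochhammer ℂ n).eval ((r:ℂ)+2) = (((r+2).ascFactorial n : ℕ) : ℂ) := by
    rw [show (r:ℂ) + 2 = ((r+2:ℕ):ℂ) from by push_cast; ring,
      ← ascPochhammer_eval_cast, ascPochhammer_nat_eq_ascFactorial]
  rw [e1, e2, e3]
  unfold Cc
  push_cast
  ring

end Aux

section Key

open Finset Filter

theorem summB (r m k : ℕ) (hmk : k + 1 ≤ m) (i : ℕ) (hi : i ≤ r) :
    Summable (fun n => Cc r k i n * betav m n) := by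
  have hT : Summable (fun n => ((r:ℝ)+1) * m.factorial / (k+1).factorial * uu k m n) :=
    (uu_summable k m hmk).mul_left _
  apply Summable.of_nonneg_of_le
    (fun n => mul_nonneg (Cc_nonneg r k i n) (betav_nonneg m n)) _ hT
  intro n
  rw [← aux_sum_i r m k n]
  exact Finset.single_le_sum
    (fun j _ => mul_nonneg (Cc_nonneg r k j n) (betav_nonneg m n))
    (Finset.mem_range.mpr (by omega))

theorem Gr_aesm (r k m i : ℕ) :
    AEStronglyMeasurable (fun z => ((Gr r k m i z : ℝ) : ℂ))
      (volume.restrict (Set.Ioo (0:ℝ) 1)) := by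
  have hGm : AEStronglyMeasurable (Gr r k m i) (volume.restrict (Set.Ioo (0:ℝ) 1)) := by
    set φ : ℝ → ℝ := (Set.Ioo (0:ℝ) 1).indicator (Gr r k m i) with hφdef
    have hSN : ∀ N : ℕ, Measurable ((Set.Ioo (0:ℝ) 1).indicator
        (fun z => ∑ n ∈ Finset.range N, Cc r k i n * ((1-z)^m * z^(n+1)))) := by
      intro N
      apply Measurable.indicator _ measurableSet_Ioo
      exact (by continuity : Continuous
        (fun z : ℝ => ∑ n ∈ Finset.range N, Cc r k i n * ((1-z)^m * z^(n+1)))).measurable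
    have hlim : Tendsto (fun N : ℕ => (Set.Ioo (0:ℝ) 1).indicator
        (fun z => ∑ n ∈ Finset.range N, Cc r k i n * ((1-z)^m * z^(n+1)))) atTop (nhds φ) := by
      rw [tendsto_pi_nhds]
      intro z
      by_cases hz : z ∈ Set.Ioo (0:ℝ) 1
      · simp only [Set.indicator_of_mem hz, hφdef]
        exact (hasSum_Gr r k m i hz.1 hz.2).tendsto_sum_nat
      · simp only [Set.indicator_of_notMem hz, hφdef]
        exact tendsto_const_nhds
    have hφ : Measurable φ := measurable_of_tendsto_metrizable hSN hlim
    apply hφ.aestronglyMeasurable.congr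
    filter_upwards [ae_restrict_mem measurableSet_Ioo] with z hz
    simp [hφdef, Set.indicator_of_mem hz]
  exact Complex.continuous_ofReal.comp_aestronglyMeasurable hGm

theorem key_int (r m k : ℕ) (hmk : k + 1 ≤ m) (i : ℕ) (hi : i ≤ r) :
    IntegrableOn (fun z : ℝ => ((Gr r k m i z : ℝ) : ℂ)) (Set.Ioo 0 1) ∧
    ∫ z in Set.Ioo (0:ℝ) 1, ((Gr r k m i z : ℝ) : ℂ) = ((Vr r k m i : ℝ) : ℂ) := by
  have hsummB := summB r m k hmk i hi
  have hint_n : ∀ n : ℕ, IntegrableOn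
      (fun z : ℝ => Cc r k i n * ((1-z)^m * z^(n+1))) (Set.Ioo 0 1) := by
    intro n
    have := (Ib_int m (n+1)).const_mul (Cc r k i n)
    exact this
  have hval_n : ∀ n : ℕ, ∫ z in Set.Ioo (0:ℝ) 1, Cc r k i n * ((1-z)^m * z^(n+1))
      = Cc r k i n * betav m n := by
    intro n
    rw [integral_const_mul, Ibeta_r m n]
  have hnn : ∀ n : ℕ, 0 ≤ᵐ[volume.restrict (Set.Ioo (0:ℝ) 1)]
      (fun z => Cc r k i n * ((1-z)^m * z^(n+1))) := by
    intro n
    filter_upwards [ae_restrict_mem measurableSet_Ioo] with z hz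
    exact term_nonneg r k m i n hz.1 hz.2
  have hlint : ∀ n : ℕ, ∫⁻ z in Set.Ioo (0:ℝ) 1,
      ENNReal.ofReal (Cc r k i n * ((1-z)^m * z^(n+1)))
      = ENNReal.ofReal (Cc r k i n * betav m n) := by
    intro n
    rw [← ofReal_integral_eq_lintegral_ofReal (hint_n n) (hnn n), hval_n n]
  -- complex term functions
  set fc : ℕ → ℝ → ℂ := fun n z => ((Cc r k i n * ((1-z)^m * z^(n+1)) : ℝ) : ℂ) with hfc
  have hfc_meas : ∀ n, AEStronglyMeasurable (fc n) (volume.restrict (Set.Ioo (0:ℝ) 1)) := by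
    intro n
    exact (Complex.continuous_ofReal.comp
      (by continuity : Continuous (fun z : ℝ => Cc r k i n * ((1-z)^m * z^(n+1))))).aestronglyMeasurable
  have hnnorm : ∀ n : ℕ, ∫⁻ z in Set.Ioo (0:ℝ) 1, (‖fc n z‖₊ : ENNReal)
      = ENNReal.ofReal (Cc r k i n * betav m n) := by
    intro n
    rw [← hlint n]
    apply lintegral_congr_ae
    filter_upwards [ae_restrict_mem measurableSet_Ioo] with z hz
    rw [← enorm_eq_nnnorm, ← ofReal_norm]
    congr 1
    rw [hfc]
    simp only [Complex.norm_real]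
    exact Real.norm_of_nonneg (term_nonneg r k m i n hz.1 hz.2)
  have hne : ∑' n, ∫⁻ z in Set.Ioo (0:ℝ) 1, (‖fc n z‖₊ : ENNReal) ≠ ⊤ := by
    rw [tsum_congr hnnorm,
      ← ENNReal.ofReal_tsum_of_nonneg
        (fun n => mul_nonneg (Cc_nonneg r k i n) (betav_nonneg m n)) hsummB]
    exact ENNReal.ofReal_ne_top
  have hrep : (fun z : ℝ => ((Gr r k m i z : ℝ) : ℂ)) = fun z => ∑' n, fc n z := by
    funext z
    unfold Gr
    exact Complex.ofReal_tsum _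
  constructor
  · constructor
    · exact Gr_aesm r k m i
    · show (∫⁻ z in Set.Ioo (0:ℝ) 1, (‖((Gr r k m i z : ℝ) : ℂ)‖₊ : ENNReal)) < ⊤
      have step1 : ∫⁻ z in Set.Ioo (0:ℝ) 1, (‖((Gr r k m i z : ℝ) : ℂ)‖₊ : ENNReal)
          = ∫⁻ z in Set.Ioo (0:ℝ) 1, ∑' n, ENNReal.ofReal (Cc r k i n * ((1-z)^m * z^(n+1))) := by
        apply lintegral_congr_ae
        filter_upwards [ae_restrict_mem measurableSet_Ioo] with z hz
        rw [← enorm_eq_nnnorm, ← ofReal_norm]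
        have h1 : ‖((Gr r k m i z : ℝ) : ℂ)‖ = Gr r k m i z := by
          simp only [Complex.norm_real]
          exact Real.norm_of_nonneg (Gr_nonneg r k m i hz.1 hz.2)
        rw [h1]
        unfold Gr
        exact ENNReal.ofReal_tsum_of_nonneg (fun n => term_nonneg r k m i n hz.1 hz.2)
          (summable_term r k m i hz.1 hz.2)
      rw [step1, lintegral_tsum (fun n => ((by continuity : Continuous
        (fun z : ℝ => Cc r k i n * ((1-z)^m * z^(n+1)))).measurable.ennreal_ofReal).aemeasurable)]
      rw [tsum_congr hlint,
        ← ENNReal.ofReal_tsum_of_nonneg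
          (fun n => mul_nonneg (Cc_nonneg r k i n) (betav_nonneg m n)) hsummB]
      exact ENNReal.ofReal_lt_top
  · rw [hrep, integral_tsum hfc_meas hne]
    have hv : ∀ n : ℕ, ∫ z in Set.Ioo (0:ℝ) 1, fc n z
        = ((Cc r k i n * betav m n : ℝ) : ℂ) := by
      intro n
      calc ∫ z in Set.Ioo (0:ℝ) 1, fc n z
          = ((∫ z in Set.Ioo (0:ℝ) 1, Cc r k i n * ((1-z)^m * z^(n+1)) : ℝ) : ℂ) :=
            integral_ofReal
        _ = ((Cc r k i n * betav m n : ℝ) : ℂ) := by rw [hval_n n]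
    rw [tsum_congr hv]
    unfold Vr
    exact (Complex.ofReal_tsum _).symm

end Key

/-- The analytic core of the zeta-integral evaluation in case (C1, III): for `s ≤ −1`
with `m + s + 1 ≥ 1`,
`∑_{i=0}^{r} ∫₀¹ (1−z)^m z F(1+i, 1−s, r+2, z) dz = (r+1)/((m+1)(m+s+1))`,
each integrand being integrable on `(0,1)`. -/
theorem stmt_16 (r m : ℕ) (s : ℤ) (hs : s ≤ -1) (hms : 1 ≤ (m : ℤ) + s + 1) :
    (∀ i ∈ Finset.range (r + 1),
      IntegrableOn (fun z : ℝ =>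
        ((1 - z : ℝ) : ℂ) ^ m * (z : ℂ) * hyperF (1 + i) (1 - s) (r + 2) (z : ℂ))
        (Set.Ioo 0 1)) ∧
    ∑ i ∈ Finset.range (r + 1),
        ∫ z in Set.Ioo (0 : ℝ) 1,
          ((1 - z : ℝ) : ℂ) ^ m * (z : ℂ) * hyperF (1 + i) (1 - s) (r + 2) (z : ℂ)
      = ((r : ℂ) + 1) / (((m : ℂ) + 1) * ((m : ℂ) + (s : ℂ) + 1)) := by
  set k : ℕ := (-(s+1)).toNat with hkdef
  have hsk : s = -((k:ℤ)+1) := by omega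
  have hmk : k + 1 ≤ m := by omega
  have hcs : (s:ℂ) = -((k:ℂ)+1) := by
    rw [hsk]; push_cast; ring
  have hks : (1:ℂ) - (s:ℂ) = (k:ℂ) + 2 := by rw [hcs]; ring
  have hfun : ∀ i : ℕ, (fun z : ℝ =>
      ((1 - z : ℝ) : ℂ) ^ m * (z : ℂ) * hyperF (1 + (i:ℂ)) (1 - (s:ℂ)) ((r:ℂ) + 2) (z : ℂ))
      = fun z : ℝ => ((Gr r k m i z : ℝ) : ℂ) := by
    intro i
    funext z
    rw [hks]
    exact integrand_ofReal r k m i z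
  have hmkR : (0:ℝ) < (m:ℝ) - k := by
    have : (k:ℝ) + 1 ≤ (m:ℝ) := by exact_mod_cast hmk
    linarith
  have hVsum : ∑ i ∈ Finset.range (r+1), Vr r k m i
      = ((r:ℝ)+1)/(((m:ℝ)+1)*((m:ℝ)-(k:ℝ))) := by
    unfold Vr
    rw [← Summable.tsum_finsetSum (fun i hi => summB r m k hmk i (by
      have := Finset.mem_range.mp hi; omega))]
    rw [tsum_congr (fun n => aux_sum_i r m k n), tsum_mul_left, uu_tsum k m hmk]
    have hm1 : ((m+1).factorial : ℝ) = ((m:ℝ)+1) * (m.factorial : ℝ) := fac_step m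
    rw [hm1]
    have h1 : (0:ℝ) < (m.factorial : ℝ) := by positivity
    have h2 : (0:ℝ) < ((k+1).factorial : ℝ) := by positivity
    field_simp
  constructor
  · intro i hi
    have hir := Finset.mem_range.mp hi
    rw [hfun i]
    exact (key_int r m k hmk i (by omega)).1
  · have hi_each : ∀ i ∈ Finset.range (r+1),
        ∫ z in Set.Ioo (0 : ℝ) 1,
          ((1 - z : ℝ) : ℂ) ^ m * (z : ℂ) * hyperF (1 + (i:ℂ)) (1 - (s:ℂ)) ((r:ℂ) + 2) (z : ℂ)
        = ((Vr r k m i : ℝ) : ℂ) := by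
      intro i hi
      calc ∫ z in Set.Ioo (0 : ℝ) 1,
          ((1 - z : ℝ) : ℂ) ^ m * (z : ℂ) * hyperF (1 + (i:ℂ)) (1 - (s:ℂ)) ((r:ℂ) + 2) (z : ℂ)
          = ∫ z in Set.Ioo (0 : ℝ) 1, ((Gr r k m i z : ℝ) : ℂ) := by rw [hfun i]
        _ = ((Vr r k m i : ℝ) : ℂ) :=
            (key_int r m k hmk i (by have := Finset.mem_range.mp hi; omega)).2
    rw [Finset.sum_congr rfl hi_each]
    rw [show ((m:ℂ) + (s:ℂ) + 1) = (m:ℂ) - (k:ℂ) from by rw [hcs]; ring]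
    rw [← Complex.ofReal_sum, hVsum]
    push_cast
    ring
end

section
/- Let ν ≥ 1, μ ≥ 0 and β ≥ 0 be integers. Then the double integral ∫_0^1 ∫_0^1 (1−z)^{ν−1} · z · (1−zx)^{β+μ−ν} dx dz converges and equals 1 / (ν(β+μ+1)). -/
/-!
By Fubini, and the substitution `t = 1 - z x` in the inner integral, the double integral equals
`∫₀¹ (1 - z)^n ∫_{1-z}^1 t^e dt dz` with `n = ν - 1`, `e = β + μ - ν`. For `e ≠ -1` the integrand
is `((1 - z)^n - (1 - z)^k) / (e + 1)` with `k = n + e + 1 = β + μ`, and for `e = -1` (then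
`k = n`) it is `-(1 - z)^n log (1 - z)`; in both cases it integrates to `1 / ((n + 1)(k + 1))`.
As the integrand is nonnegative on the open square, its integrability reduces (Tonelli) to that
of this one-variable function.
-/

open MeasureTheory Real Set intervalIntegral
open scoped Interval

lemma intervalIntegrable_pow_mul_log (n : ℕ) :
    IntervalIntegrable (fun u : ℝ => u ^ n * log u) volume 0 1 :=
  intervalIntegrable_log'.continuousOn_mul (continuous_pow n).continuousOn

lemma integral_pow_mul_log (n : ℕ) :
    ∫ u in (0 : ℝ)..1, u ^ n * log u = -((n : ℝ) + 1)⁻¹ ^ 2 := by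
  -- a primitive written through `u * log u` so that its continuity at `0` is visible
  set F : ℝ → ℝ := fun u => u ^ n * (u * log u) / (n + 1) - u ^ (n + 1) / (n + 1) ^ 2
  have hF : F = fun u => u ^ (n + 1) * log u / (n + 1) - u ^ (n + 1) / (n + 1) ^ 2 := by
    ext u; simp only [F]; ring
  have hcont : ContinuousOn F (Icc 0 1) :=
    (((continuous_pow n).mul continuous_mul_log).div_const _ |>.sub
      ((continuous_pow (n + 1)).div_const _)).continuousOn
  have hderiv : ∀ u ∈ Ioo (0 : ℝ) 1, HasDerivAt F (u ^ n * log u) u := by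
    intro u hu
    have hu0 : u ≠ 0 := hu.1.ne'
    rw [hF]
    refine ((((hasDerivAt_pow (n + 1) u).mul (hasDerivAt_log hu0)).div_const ((n : ℝ) + 1)).sub
      ((hasDerivAt_pow (n + 1) u).div_const (((n : ℝ) + 1) ^ 2))).congr_deriv ?_
    rw [Nat.add_sub_cancel]
    push_cast
    field_simp
    ring
  rw [integral_eq_sub_of_hasDerivAt_of_le zero_le_one hcont hderiv
    (intervalIntegrable_pow_mul_log n)]
  simp [F]

lemma integral_one_sub_pow (m : ℕ) : ∫ z in (0 : ℝ)..1, (1 - z) ^ m = ((m : ℝ) + 1)⁻¹ := by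
  rw [integral_comp_sub_left (fun s : ℝ => s ^ m)]
  simp

lemma zero_notMem_uIcc_one_sub_one {z : ℝ} (hz : z < 1) : (0 : ℝ) ∉ [[1 - z, 1]] := by
  rw [mem_uIcc]
  rintro (⟨h, -⟩ | ⟨h, -⟩) <;> linarith

lemma one_sub_pow_mul_integral_zpow {n k : ℕ} {e : ℤ} (he : e ≠ -1) (hk : (k : ℤ) = n + e + 1)
    {z : ℝ} (hz : z < 1) :
    (1 - z) ^ n * ∫ t in (1 - z)..1, t ^ e = ((1 - z) ^ n - (1 - z) ^ k) / (e + 1) := by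
  have hz₀ : 0 < 1 - z := by linarith
  have he₁ : (e : ℝ) + 1 ≠ 0 := by exact_mod_cast (show e + 1 ≠ 0 by omega)
  have hk' : (1 - z) ^ n * (1 - z) ^ (e + 1) = (1 - z) ^ k := by
    rw [← zpow_natCast, ← zpow_add₀ hz₀.ne', ← zpow_natCast, hk, add_assoc]
  rw [integral_zpow (Or.inr ⟨he, zero_notMem_uIcc_one_sub_one hz⟩), one_zpow, ← hk']
  field_simp

lemma one_sub_pow_mul_integral_zpow_neg_one (n : ℕ) {z : ℝ} (hz : z < 1) :
    (1 - z) ^ n * ∫ t in (1 - z)..1, t ^ (-1 : ℤ) = -((1 - z) ^ n * log (1 - z)) := by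
  simp only [zpow_neg_one]
  rw [integral_inv (zero_notMem_uIcc_one_sub_one hz), one_div, log_inv, mul_neg]

lemma integrableOn_Ioo_and_integral_eq_of_eqOn {f g : ℝ → ℝ} {a b : ℝ} (hab : a ≤ b)
    (hfg : EqOn f g (Ioo a b)) (hg : IntervalIntegrable g volume a b) :
    IntegrableOn f (Ioo a b) ∧ ∫ x in Ioo a b, f x = ∫ x in a..b, g x := by
  rw [intervalIntegrable_iff_integrableOn_Ioc_of_le hab] at hg
  refine ⟨(hg.mono_set Ioo_subset_Ioc_self).congr_fun hfg.symm measurableSet_Ioo, ?_⟩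
  rw [setIntegral_congr_fun measurableSet_Ioo hfg, integral_of_le hab, integral_Ioc_eq_integral_Ioo]

lemma integrableOn_and_integral_one_sub_pow_mul_integral_zpow (n k : ℕ) (e : ℤ)
    (hk : (k : ℤ) = n + e + 1) :
    IntegrableOn (fun z : ℝ => (1 - z) ^ n * ∫ t in (1 - z)..1, t ^ e) (Ioo 0 1) ∧
      ∫ z in Ioo (0 : ℝ) 1, (1 - z) ^ n * ∫ t in (1 - z)..1, t ^ e
        = (((n : ℝ) + 1) * (k + 1))⁻¹ := by
  rcases eq_or_ne e (-1) with rfl | he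
  · obtain rfl : n = k := by omega
    have hg : IntervalIntegrable (fun z : ℝ => -((1 - z) ^ n * log (1 - z))) volume 0 1 := by
      have h := (intervalIntegrable_pow_mul_log n).comp_sub_left 1
      rw [sub_zero, sub_self] at h
      exact h.symm.neg
    obtain ⟨hint, hval⟩ := integrableOn_Ioo_and_integral_eq_of_eqOn zero_le_one
      (fun z hz => one_sub_pow_mul_integral_zpow_neg_one n hz.2) hg
    refine ⟨hint, hval.trans ?_⟩
    rw [intervalIntegral.integral_neg, integral_comp_sub_left (fun s => s ^ n * log s),
      sub_self, sub_zero, integral_pow_mul_log, neg_neg, inv_pow, sq]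
  · have hg : IntervalIntegrable (fun z : ℝ => ((1 - z) ^ n - (1 - z) ^ k) / (e + 1)) volume 0 1 :=
      (by fun_prop : Continuous _).intervalIntegrable 0 1
    obtain ⟨hint, hval⟩ := integrableOn_Ioo_and_integral_eq_of_eqOn zero_le_one
      (fun z hz => one_sub_pow_mul_integral_zpow he hk hz.2) hg
    refine ⟨hint, hval.trans ?_⟩
    have he' : (e : ℝ) + 1 = k - n := by
      have := congrArg (Int.cast (R := ℝ)) hk
      push_cast at this
      linarith
    have hkn : (k : ℝ) - n ≠ 0 := by rw [← he']; exact_mod_cast (show e + 1 ≠ 0 by omega)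
    have hcont (m : ℕ) : IntervalIntegrable (fun z : ℝ => (1 - z) ^ m) volume 0 1 :=
      ((continuous_const.sub continuous_id).pow m).intervalIntegrable 0 1
    rw [intervalIntegral.integral_div, intervalIntegral.integral_sub (hcont n) (hcont k),
      integral_one_sub_pow, integral_one_sub_pow, he']
    field_simp
    ring

lemma mul_integral_comp_one_sub_mul (f : ℝ → ℝ) {z : ℝ} (hz : z ≠ 0) :
    z * ∫ x in (0 : ℝ)..1, f (1 - z * x) = ∫ t in (1 - z)..1, f t := by
  rw [integral_comp_mul_left (fun u => f (1 - u)) hz, integral_comp_sub_left, smul_eq_mul,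
    mul_inv_cancel_left₀ hz, mul_zero, mul_one, sub_zero]

lemma setIntegral_Ioo_pow_mul_zpow_one_sub_mul (n : ℕ) (e : ℤ) {z : ℝ} (hz : z ≠ 0) :
    ∫ x in Ioo (0 : ℝ) 1, (1 - z) ^ n * z * (1 - z * x) ^ e
      = (1 - z) ^ n * ∫ t in (1 - z)..1, t ^ e := by
  rw [← integral_Ioc_eq_integral_Ioo, ← integral_of_le zero_le_one,
    intervalIntegral.integral_const_mul, mul_assoc, mul_integral_comp_one_sub_mul (· ^ e) hz]

lemma integrableOn_zpow_one_sub_mul (e : ℤ) {z : ℝ} (hz : z ∈ Ioo (0 : ℝ) 1) :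
    IntegrableOn (fun x : ℝ => (1 - z * x) ^ e) (Ioo 0 1) := by
  refine (ContinuousOn.integrableOn_Icc ?_).mono_set Ioo_subset_Icc_self
  refine ContinuousOn.zpow₀ (by fun_prop) _ fun x hx => Or.inl ?_
  nlinarith [hz.1, hz.2, hx.1, hx.2]

lemma integrableOn_prod_and_integral_prod_of_nonneg {α β : Type*} [MeasurableSpace α]
    [MeasurableSpace β] {μ : Measure α} {ν : Measure β} [SFinite μ] [SFinite ν]
    {f : α × β → ℝ} {s : Set α} {t : Set β}
    (hf : AEStronglyMeasurable f ((μ.prod ν).restrict (s ×ˢ t))) (hs : MeasurableSet s)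
    (ht : MeasurableSet t) (hf₀ : ∀ a ∈ s, ∀ b ∈ t, 0 ≤ f (a, b))
    (hsec : ∀ a ∈ s, IntegrableOn (fun b => f (a, b)) t ν)
    (hint : IntegrableOn (fun a => ∫ b in t, f (a, b) ∂ν) s μ) :
    IntegrableOn f (s ×ˢ t) (μ.prod ν) ∧
      ∫ p in s ×ˢ t, f p ∂(μ.prod ν) = ∫ a in s, ∫ b in t, f (a, b) ∂ν ∂μ := by
  unfold IntegrableOn
  rw [← Measure.prod_restrict] at hf ⊢
  have hnorm : ∀ a ∈ s, ∫ b in t, ‖f (a, b)‖ ∂ν = ∫ b in t, f (a, b) ∂ν := fun a ha =>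
    setIntegral_congr_fun ht fun b hb => norm_of_nonneg (hf₀ a ha b hb)
  have hprod : Integrable f ((μ.restrict s).prod (ν.restrict t)) := by
    refine (integrable_prod_iff hf).2 ⟨?_, ?_⟩
    · filter_upwards [ae_restrict_mem hs] with a ha using hsec a ha
    · exact hint.congr_fun (fun a ha => (hnorm a ha).symm) hs
  exact ⟨hprod, integral_prod f hprod⟩

lemma integrableOn_and_integral_unitSquare_eq (n : ℕ) (e : ℤ)
    (hint : IntegrableOn (fun z : ℝ => (1 - z) ^ n * ∫ t in (1 - z)..1, t ^ e) (Ioo 0 1)) :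
    IntegrableOn (fun p : ℝ × ℝ => (1 - p.1) ^ n * p.1 * (1 - p.1 * p.2) ^ e)
        (Ioo 0 1 ×ˢ Ioo 0 1) ∧
      ∫ p in Ioo (0 : ℝ) 1 ×ˢ Ioo (0 : ℝ) 1, (1 - p.1) ^ n * p.1 * (1 - p.1 * p.2) ^ e
        = ∫ z in Ioo (0 : ℝ) 1, (1 - z) ^ n * ∫ t in (1 - z)..1, t ^ e := by
  have hsec : EqOn (fun z => ∫ x in Ioo (0 : ℝ) 1, (1 - z) ^ n * z * (1 - z * x) ^ e)
      (fun z => (1 - z) ^ n * ∫ t in (1 - z)..1, t ^ e) (Ioo 0 1) := fun z hz =>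
    setIntegral_Ioo_pow_mul_zpow_one_sub_mul n e hz.1.ne'
  obtain ⟨hf, hf_eq⟩ := integrableOn_prod_and_integral_prod_of_nonneg (μ := volume) (ν := volume)
    (f := fun p : ℝ × ℝ => (1 - p.1) ^ n * p.1 * (1 - p.1 * p.2) ^ e)
    (by fun_prop : Measurable _).aestronglyMeasurable measurableSet_Ioo measurableSet_Ioo
    (fun z ⟨hz₀, hz₁⟩ x ⟨hx₀, hx₁⟩ => by
      have : 0 < 1 - z * x := by nlinarith
      have : 0 < 1 - z := by linarith
      positivity)
    (fun z hz => (integrableOn_zpow_one_sub_mul e hz).const_mul ((1 - z) ^ n * z))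
    (hint.congr_fun hsec.symm measurableSet_Ioo)
  exact ⟨hf, hf_eq.trans (setIntegral_congr_fun measurableSet_Ioo hsec)⟩

/-- The analytic core of the zeta-integral evaluation in case (C2, III):
for `ν ≥ 1`, `μ, β ≥ 0`,
`∫₀¹∫₀¹ (1−z)^{ν−1} z (1−zx)^{β+μ−ν} dx dz = 1/(ν(β+μ+1))` (with convergence). -/
theorem stmt_17 (ν μ β : ℕ) (hν : 1 ≤ ν) :
    IntegrableOn (fun p : ℝ × ℝ =>
        (1 - p.1) ^ (ν - 1) * p.1 * (1 - p.1 * p.2) ^ ((β : ℤ) + (μ : ℤ) - (ν : ℤ)))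
      (Set.Ioo 0 1 ×ˢ Set.Ioo 0 1) ∧
    ∫ p in Set.Ioo (0 : ℝ) 1 ×ˢ Set.Ioo (0 : ℝ) 1,
        (1 - p.1) ^ (ν - 1) * p.1 * (1 - p.1 * p.2) ^ ((β : ℤ) + (μ : ℤ) - (ν : ℤ))
      = 1 / ((ν : ℝ) * ((β : ℝ) + (μ : ℝ) + 1)) := by
  obtain ⟨hint, hval⟩ := integrableOn_and_integral_one_sub_pow_mul_integral_zpow
    (ν - 1) (β + μ) ((β : ℤ) + μ - ν) (by omega)
  obtain ⟨hf, hf_eq⟩ := integrableOn_and_integral_unitSquare_eq (ν - 1) _ hint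
  refine ⟨hf, hf_eq.trans (hval.trans ?_)⟩
  rw [Nat.cast_sub hν]
  push_cast
  ring
end

section
/- Let μ ≥ 0, ν ≥ 0 and β ≥ 1 be integers and set r = μ + ν. Then (r! / ((r+1)!)²) · ∑_{i=0}^{r} ∑_{j=0}^{μ} binom(μ,j) · binom(ν, i−j) · i! · (r−i)! · ∫_0^∞ (cosh t)^{2j − 2μ − 2β − 4} sinh²(t) sinh(2t) dt = 1 / ((r+1)(β+μ+1)β). -/
open MeasureTheory

open Real Filter Finset Topology in

lemma intLemma (b : ℕ) :
    (∫ t in Set.Ioi (0:ℝ), (Real.cosh t ^ (2*b+6))⁻¹ * Real.sinh t ^ 2 * Real.sinh (2*t))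
      = 1/((b:ℝ)+1) - 1/((b:ℝ)+2) := by
  have hb1 : ((b:ℝ)+1) ≠ 0 := by positivity
  have hb2 : ((b:ℝ)+2) ≠ 0 := by positivity
  set F : ℝ → ℝ := fun t =>
    -((Real.cosh t ^ (2*b+2))⁻¹ / ((b:ℝ)+1)) + (Real.cosh t ^ (2*b+4))⁻¹ / ((b:ℝ)+2) with hFdef
  have hF : ∀ t : ℝ, HasDerivAt F
      ((Real.cosh t ^ (2*b+6))⁻¹ * Real.sinh t ^ 2 * Real.sinh (2*t)) t := by
    intro t
    have hc : Real.cosh t ≠ 0 := (Real.cosh_pos t).ne'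
    have h1 := (((Real.hasDerivAt_cosh t).pow (2*b+2)).inv (pow_ne_zero _ hc)).div_const ((b:ℝ)+1)
    have h2 := (((Real.hasDerivAt_cosh t).pow (2*b+4)).inv (pow_ne_zero _ hc)).div_const ((b:ℝ)+2)
    have h3 := h1.neg.add h2
    refine h3.congr_deriv ?_
    rw [Real.sinh_two_mul]
    have e1 : 2*b+2-1 = 2*b+1 := by omega
    have e2 : 2*b+4-1 = 2*b+3 := by omega
    rw [e1, e2]
    simp only [Pi.pow_apply, Nat.cast_add, Nat.cast_mul, Nat.cast_ofNat]
    rw [show Real.sinh t ^ 2 = Real.cosh t ^ 2 - 1 by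
      have := Real.cosh_sq t; linarith]
    field_simp
    ring
  have hcosh : Tendsto Real.cosh atTop atTop := by
    apply tendsto_atTop_mono (fun x => ?_) (Real.tendsto_exp_atTop.atTop_div_const (by norm_num : (0:ℝ) < 2))
    rw [Real.cosh_eq]
    have := Real.exp_pos (-x)
    linarith
  have hlim : Tendsto F atTop (𝓝 0) := by
    have l1 : Tendsto (fun t => (Real.cosh t ^ (2*b+2))⁻¹) atTop (𝓝 0) :=
      tendsto_inv_atTop_zero.comp ((tendsto_pow_atTop (by omega)).comp hcosh)
    have l2 : Tendsto (fun t => (Real.cosh t ^ (2*b+4))⁻¹) atTop (𝓝 0) :=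
      tendsto_inv_atTop_zero.comp ((tendsto_pow_atTop (by omega)).comp hcosh)
    have := ((l1.div_const ((b:ℝ)+1)).neg).add (l2.div_const ((b:ℝ)+2))
    simpa using this
  have key := integral_Ioi_of_hasDerivAt_of_nonneg' (g := F) (a := 0)
    (fun x _ => hF x)
    (fun x hx => by
      have hx0 : (0:ℝ) ≤ x := le_of_lt hx
      have h2x : (0:ℝ) ≤ Real.sinh (2*x) := Real.sinh_nonneg_iff.2 (by linarith)
      positivity)
    hlim
  rw [key, hFdef]
  simp [Real.cosh_zero]
  ring


lemma Lsum (ν : ℕ) : ∀ j c : ℕ,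
    (∑ m ∈ Finset.range (ν+1), ν.choose m * ((j+m).factorial * (c+(ν-m)).factorial))
        * (j+c+1).factorial
      = (j+c+ν+1).factorial * (j.factorial * c.factorial) := by
  induction ν with
  | zero => intro j c; simp [Nat.factorial]; ring
  | succ ν ih =>
    intro j c
    have hT1 : (∑ m ∈ Finset.range (ν+1+1), ν.choose m * ((j+m).factorial * ((c+1)+(ν-m)).factorial))
        = (∑ m ∈ Finset.range (ν+1), ν.choose (m+1) * ((j+(m+1)).factorial * (c+(ν-m)).factorial))
          + (j.factorial * (c+(ν+1)).factorial) := by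
      rw [Finset.sum_range_succ']
      congr 1
      · apply Finset.sum_congr rfl
        intro m hm
        simp only [Finset.mem_range] at hm
        rcases Nat.lt_succ_iff_lt_or_eq.1 hm with h | h
        · rw [show (c+1)+(ν-(m+1)) = c+(ν-m) by omega]
        · subst h; rw [Nat.choose_succ_self]; simp
      · rw [show (c+1)+(ν-0) = c+(ν+1) by omega]
        simp
    have hT2 : (∑ m ∈ Finset.range (ν+1+1), ν.choose m * ((j+m).factorial * ((c+1)+(ν-m)).factorial))
        = ∑ m ∈ Finset.range (ν+1), ν.choose m * ((j+m).factorial * ((c+1)+(ν-m)).factorial) := by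
      rw [Finset.sum_range_succ]
      simp
    have split : (∑ m ∈ Finset.range (ν+1+1), (ν+1).choose m * ((j+m).factorial * (c+(ν+1-m)).factorial))
        = (∑ m ∈ Finset.range (ν+1), ν.choose m * (((j+1)+m).factorial * (c+(ν-m)).factorial))
          + (∑ m ∈ Finset.range (ν+1), ν.choose m * ((j+m).factorial * ((c+1)+(ν-m)).factorial)) := by
      rw [Finset.sum_range_succ']
      have e0 : ∀ m ∈ Finset.range (ν+1),
          (ν+1).choose (m+1) * ((j+(m+1)).factorial * (c+(ν+1-(m+1))).factorial)
          = ν.choose m * (((j+1)+m).factorial * (c+(ν-m)).factorial)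
            + ν.choose (m+1) * ((j+(m+1)).factorial * (c+(ν-m)).factorial) := by
        intro m hm
        rw [show j+(m+1) = (j+1)+m by omega, show ν+1-(m+1) = ν-m by omega,
          Nat.choose_succ_succ, Nat.add_mul]
      rw [Finset.sum_congr rfl e0, Finset.sum_add_distrib, ← hT2, hT1]
      rw [show (ν+1).choose 0 * ((j+0).factorial * (c+(ν+1-0)).factorial)
            = j.factorial * (c+(ν+1)).factorial by simp]
      omega
    have ih1 := ih (j+1) c
    have ih2 := ih j (c+1)
    rw [show (j+1)+c+1 = j+c+2 by omega] at ih1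
    rw [show j+(c+1)+1 = j+c+2 by omega] at ih2
    rw [show (j+1)+c+ν+1 = j+c+ν+2 by omega] at ih1
    rw [show j+(c+1)+ν+1 = j+c+ν+2 by omega] at ih2
    have hfac : (j+c+2).factorial = (j+c+2) * (j+c+1).factorial := by
      rw [show j+c+2 = (j+c+1)+1 by omega, Nat.factorial_succ]
    apply Nat.eq_of_mul_eq_mul_right (show 0 < j+c+2 by omega)
    calc (∑ m ∈ Finset.range (ν+1+1), (ν+1).choose m * ((j+m).factorial * (c+(ν+1-m)).factorial))
          * (j+c+1).factorial * (j+c+2)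
        = (∑ m ∈ Finset.range (ν+1+1), (ν+1).choose m * ((j+m).factorial * (c+(ν+1-m)).factorial))
            * (j+c+2).factorial := by rw [hfac]; ring
      _ = (j+c+ν+2).factorial * ((j+1).factorial * c.factorial)
            + (j+c+ν+2).factorial * (j.factorial * (c+1).factorial) := by
          rw [split, Nat.add_mul, ih1, ih2]
      _ = (j+c+(ν+1)+1).factorial * (j.factorial * c.factorial) * (j+c+2) := by
          rw [show j+c+(ν+1)+1 = j+c+ν+2 by omega, Nat.factorial_succ j, Nat.factorial_succ c]
          ring

lemma isum (μ ν j : ℕ) (hj : j ≤ μ) :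
    (∑ i ∈ Finset.range (μ+ν+1),
        (if j ≤ i then ν.choose (i-j) else 0) * (i.factorial * (μ+ν-i).factorial))
      * (μ+1).factorial
    = (μ+ν+1).factorial * (j.factorial * (μ-j).factorial) := by
  have h1 : (∑ i ∈ Finset.range (μ+ν+1),
        (if j ≤ i then ν.choose (i-j) else 0) * (i.factorial * (μ+ν-i).factorial))
      = ∑ i ∈ Finset.Ico j (μ+ν+1), ν.choose (i-j) * (i.factorial * (μ+ν-i).factorial) := by
    rw [Finset.range_eq_Ico, ← Finset.sum_Ico_consecutive _ (Nat.zero_le j) (by omega : j ≤ μ+ν+1)]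
    have : ∑ i ∈ Finset.Ico 0 j, (if j ≤ i then ν.choose (i-j) else 0) * (i.factorial * (μ+ν-i).factorial) = 0 := by
      apply Finset.sum_eq_zero
      intro i hi
      simp only [Finset.mem_Ico] at hi
      rw [if_neg (by omega)]
      ring
    rw [this, zero_add]
    apply Finset.sum_congr rfl
    intro i hi
    simp only [Finset.mem_Ico] at hi
    rw [if_pos hi.1]
  rw [h1, Finset.sum_Ico_eq_sum_range]
  have h2 : ∀ m, j + m - j = m := fun m => by omega
  have h3 : (∑ m ∈ Finset.range (μ+ν+1-j), ν.choose (j+m-j) * ((j+m).factorial * (μ+ν-(j+m)).factorial))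
      = ∑ m ∈ Finset.range (μ+ν+1-j), ν.choose m * ((j+m).factorial * ((μ-j)+(ν-m)).factorial) := by
    apply Finset.sum_congr rfl
    intro m hm
    simp only [Finset.mem_range] at hm
    rw [h2]
    by_cases hmn : m ≤ ν
    · rw [show μ+ν-(j+m) = (μ-j)+(ν-m) by omega]
    · rw [Nat.choose_eq_zero_of_lt (by omega : ν < m)]
      ring
  have h4 : (∑ m ∈ Finset.range (μ+ν+1-j), ν.choose m * ((j+m).factorial * ((μ-j)+(ν-m)).factorial))
      = ∑ m ∈ Finset.range (ν+1), ν.choose m * ((j+m).factorial * ((μ-j)+(ν-m)).factorial) := by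
    rw [Eq.comm]
    apply Finset.sum_subset (Finset.range_subset_range.2 (by omega))
    intro m _ hm
    simp only [Finset.mem_range, not_lt] at hm
    rw [Nat.choose_eq_zero_of_lt (by omega : ν < m)]
    ring
  rw [h3, h4]
  have := Lsum ν j (μ-j)
  rw [show j+(μ-j)+1 = μ+1 by omega, show j+(μ-j)+ν+1 = μ+ν+1 by omega] at this
  exact this

/-- The analytic core of the zeta-integral evaluation in case (C2, II): for
`r = μ + ν` and `β ≥ 1`,
`(r!/((r+1)!)²) ∑_{i=0}^{r} ∑_{j=0}^{μ} C(μ,j) C(ν,i−j) i! (r−i)!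
  ∫₀^∞ (cosh t)^{2j−2μ−2β−4} sinh²t sinh(2t) dt = 1/((r+1)(β+μ+1)β)`,
where `C(ν,i−j) = 0` when `j > i`. -/
theorem stmt_18 (μ ν β r : ℕ) (hβ : 1 ≤ β) (hr : r = μ + ν) :
    (r.factorial : ℝ) / ((r + 1).factorial : ℝ) ^ 2 *
      ∑ i ∈ Finset.range (r + 1), ∑ j ∈ Finset.range (μ + 1),
        (μ.choose j : ℝ) * (if j ≤ i then (ν.choose (i - j) : ℝ) else 0) *
          (i.factorial : ℝ) * ((r - i).factorial : ℝ) *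
          ∫ t in Set.Ioi (0 : ℝ),
            Real.cosh t ^ (2 * (j : ℤ) - 2 * (μ : ℤ) - 2 * (β : ℤ) - 4) *
              Real.sinh t ^ 2 * Real.sinh (2 * t)
      = 1 / (((r : ℝ) + 1) * ((β : ℝ) + μ + 1) * β) := by
  subst hr
  have hβ0 : (0:ℝ) < (β:ℝ) := by exact_mod_cast hβ.trans_lt' (by norm_num)
  -- the value of the inner integral
  have hint : ∀ j ∈ Finset.range (μ+1),
      (∫ t in Set.Ioi (0:ℝ),
          Real.cosh t ^ (2*(j:ℤ) - 2*(μ:ℤ) - 2*(β:ℤ) - 4) * Real.sinh t ^ 2 * Real.sinh (2*t))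
        = 1/((μ:ℝ)+β-j) - 1/((μ:ℝ)+β-j+1) := by
    intro j hj
    simp only [Finset.mem_range] at hj
    have hjμ : j ≤ μ := by omega
    have hexp : ∀ t:ℝ, Real.cosh t ^ (2*(j:ℤ) - 2*(μ:ℤ) - 2*(β:ℤ) - 4)
        = (Real.cosh t ^ (2*(μ+β-1-j)+6))⁻¹ := by
      intro t
      rw [show (2*(j:ℤ) - 2*(μ:ℤ) - 2*(β:ℤ) - 4) = -((2*(μ+β-1-j)+6 : ℕ):ℤ) from by
        push_cast; omega, zpow_neg, zpow_natCast]
    simp only [hexp]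
    rw [intLemma (μ+β-1-j)]
    have hcast : ((μ+β-1-j : ℕ):ℝ) + 1 + j = (μ:ℝ) + β := by
      have h : (μ+β-1-j) + 1 + j = μ + β := by omega
      exact_mod_cast h
    rw [show ((μ+β-1-j:ℕ):ℝ)+1 = (μ:ℝ)+β-j by linarith,
      show ((μ+β-1-j:ℕ):ℝ)+2 = (μ:ℝ)+β-j+1 by linarith]
  -- real version of the inner (i-)sum
  have hinner : ∀ j, j ≤ μ →
      (∑ i ∈ Finset.range (μ+ν+1),
          (if j ≤ i then (ν.choose (i-j) : ℝ) else 0) * (i.factorial:ℝ) * ((μ+ν-i).factorial:ℝ))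
        = ((μ+ν+1).factorial:ℝ) * (j.factorial:ℝ) * ((μ-j).factorial:ℝ) / ((μ+1).factorial:ℝ) := by
    intro j hj
    rw [eq_div_iff (by positivity : ((μ+1).factorial:ℝ) ≠ 0)]
    have hℕ := congrArg (Nat.cast : ℕ → ℝ) (isum μ ν j hj)
    push_cast at hℕ
    rw [show (∑ i ∈ Finset.range (μ+ν+1),
          (if j ≤ i then (ν.choose (i-j) : ℝ) else 0) * (i.factorial:ℝ) * ((μ+ν-i).factorial:ℝ))
        = ∑ i ∈ Finset.range (μ+ν+1),
          (if j ≤ i then (ν.choose (i-j) : ℝ) else 0) * ((i.factorial:ℝ) * ((μ+ν-i).factorial:ℝ))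
        from Finset.sum_congr rfl fun i _ => by ring]
    linarith [hℕ]
  -- rewrite the double sum
  rw [show (∑ i ∈ Finset.range (μ+ν+1), ∑ j ∈ Finset.range (μ + 1),
        (μ.choose j : ℝ) * (if j ≤ i then (ν.choose (i - j) : ℝ) else 0) *
          (i.factorial : ℝ) * ((μ+ν-i).factorial : ℝ) *
          ∫ t in Set.Ioi (0 : ℝ),
            Real.cosh t ^ (2 * (j : ℤ) - 2 * (μ : ℤ) - 2 * (β : ℤ) - 4) *
              Real.sinh t ^ 2 * Real.sinh (2 * t))
      = ∑ i ∈ Finset.range (μ+ν+1), ∑ j ∈ Finset.range (μ + 1),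
        (μ.choose j : ℝ) * (if j ≤ i then (ν.choose (i - j) : ℝ) else 0) *
          (i.factorial : ℝ) * ((μ+ν-i).factorial : ℝ) *
          (1/((μ:ℝ)+β-j) - 1/((μ:ℝ)+β-j+1))
      from Finset.sum_congr rfl fun i _ => Finset.sum_congr rfl fun j hj => by rw [hint j hj]]
  rw [Finset.sum_comm]
  rw [show (∑ j ∈ Finset.range (μ+1), ∑ i ∈ Finset.range (μ+ν+1),
        (μ.choose j : ℝ) * (if j ≤ i then (ν.choose (i - j) : ℝ) else 0) *
          (i.factorial : ℝ) * ((μ+ν-i).factorial : ℝ) *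
          (1/((μ:ℝ)+β-j) - 1/((μ:ℝ)+β-j+1)))
      = ∑ j ∈ Finset.range (μ+1),
          ((μ+ν+1).factorial:ℝ) * (μ.factorial:ℝ) / ((μ+1).factorial:ℝ) *
            (1/((μ:ℝ)+β-j) - 1/((μ:ℝ)+β-j+1)) from by
    apply Finset.sum_congr rfl
    intro j hj
    simp only [Finset.mem_range] at hj
    have hjμ : j ≤ μ := by omega
    have hstep : (∑ i ∈ Finset.range (μ+ν+1),
        (μ.choose j : ℝ) * (if j ≤ i then (ν.choose (i - j) : ℝ) else 0) *
          (i.factorial : ℝ) * ((μ+ν-i).factorial : ℝ) *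
          (1/((μ:ℝ)+β-j) - 1/((μ:ℝ)+β-j+1)))
        = (μ.choose j : ℝ) * (1/((μ:ℝ)+β-j) - 1/((μ:ℝ)+β-j+1)) *
          ∑ i ∈ Finset.range (μ+ν+1),
            (if j ≤ i then (ν.choose (i-j) : ℝ) else 0) * (i.factorial:ℝ) * ((μ+ν-i).factorial:ℝ) := by
      rw [Finset.mul_sum]
      exact Finset.sum_congr rfl fun i _ => by ring
    rw [hstep, hinner j hjμ]
    have hjfact : (μ.choose j:ℝ) * (j.factorial:ℝ) * ((μ-j).factorial:ℝ) = (μ.factorial:ℝ) := by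
      exact_mod_cast Nat.choose_mul_factorial_mul_factorial hjμ
    calc (μ.choose j : ℝ) * (1/((μ:ℝ)+β-j) - 1/((μ:ℝ)+β-j+1)) *
          (((μ+ν+1).factorial:ℝ) * (j.factorial:ℝ) * ((μ-j).factorial:ℝ) / ((μ+1).factorial:ℝ))
        = ((μ.choose j:ℝ) * (j.factorial:ℝ) * ((μ-j).factorial:ℝ)) * ((μ+ν+1).factorial:ℝ)
            / ((μ+1).factorial:ℝ) * (1/((μ:ℝ)+β-j) - 1/((μ:ℝ)+β-j+1)) := by ring
      _ = ((μ+ν+1).factorial:ℝ) * (μ.factorial:ℝ) / ((μ+1).factorial:ℝ) *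
            (1/((μ:ℝ)+β-j) - 1/((μ:ℝ)+β-j+1)) := by rw [hjfact]; ring]
  rw [← Finset.mul_sum]
  -- telescoping sum
  have htel : (∑ j ∈ Finset.range (μ+1), (1/((μ:ℝ)+β-j) - 1/((μ:ℝ)+β-j+1)))
      = 1/(β:ℝ) - 1/((β:ℝ)+μ+1) := by
    rw [← Finset.sum_range_reflect]
    have hc : ∀ j ∈ Finset.range (μ+1),
        (1/((μ:ℝ)+β-(μ+1-1-j:ℕ)) - 1/((μ:ℝ)+β-(μ+1-1-j:ℕ)+1))
          = (fun k : ℕ => 1/((β:ℝ)+k)) j - (fun k : ℕ => 1/((β:ℝ)+k)) (j+1) := by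
      intro j hj
      simp only [Finset.mem_range] at hj
      have h1 : ((μ+1-1-j:ℕ):ℝ) = (μ:ℝ)-j := by
        rw [show μ+1-1-j = μ-j by omega, Nat.cast_sub (by omega : j ≤ μ)]
      rw [h1]
      push_cast
      ring
    rw [Finset.sum_congr rfl hc, Finset.sum_range_sub' (fun k : ℕ => 1/((β:ℝ)+k))]
    push_cast
    norm_num
    ring
  rw [htel]
  -- final arithmetic
  have h1 : ((μ+ν+1).factorial:ℝ) = ((μ+ν:ℕ):ℝ) * ((μ+ν).factorial:ℝ) + ((μ+ν).factorial:ℝ) := by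
    rw [Nat.factorial_succ]; push_cast; ring
  have h2 : ((μ+1).factorial:ℝ) = ((μ:ℝ)+1) * (μ.factorial:ℝ) := by
    rw [Nat.factorial_succ]; push_cast; ring
  have hf1 : ((μ+ν).factorial:ℝ) ≠ 0 := by positivity
  have hf2 : (μ.factorial:ℝ) ≠ 0 := by positivity
  have hb1 : ((β:ℝ)+μ+1) ≠ 0 := by positivity
  have hr1 : ((μ+ν:ℕ):ℝ) + 1 ≠ 0 := by positivity
  rw [h1, h2]
  push_cast
  field_simp
  ring
end

section
/- Let r ≥ 0 be an integer, let s ∈ ℂ with s ≠ 0, and let z ∈ ℂ with |z| < 1. Then ∑_{i=0}^{r} z · F(1+i, 1−s, r+2, z) = ((r+1)/(−s)) · ( (1−z)^s − 1 ), where (1−z)^s = exp(s · Log(1−z)) is the principal power. -/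
/-!
Compare coefficients. The Pochhammer symbols telescope,
`(x + 1)_(n+1) - (x)_(n+1) = (n + 1) (x + 1)_n`, so `∑_{i ≤ r} (1 + i)_n = (r + 1) (r + 2)_n / (n + 1)`
and the coefficient of `z^(n+1)` on the left is `(r + 1) (1 - s)_n / (n + 1)!`. Since
`(-s)_(n+1) = -s (1 - s)_n`, this is `(r + 1) / (-s)` times the coefficient of `z^(n+1)` in the
binomial series `(1 - z)^s = ∑ (-s)_n zⁿ / n!`, whose constant term `1` is the one left over.
-/

open Finset Polynomial Nat

section Pochhammer

variable {S : Type*} [CommRing S]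

theorem ascPochhammer_succ_eval_left (n : ℕ) (x : S) :
    (ascPochhammer S (n + 1)).eval x = x * (ascPochhammer S n).eval (x + 1) := by
  simp [ascPochhammer_succ_left, eval_comp]

theorem ascPochhammer_succ_eval_add_one_sub (n : ℕ) (x : S) :
    (ascPochhammer S (n + 1)).eval (x + 1) - (ascPochhammer S (n + 1)).eval x
      = (n + 1) * (ascPochhammer S n).eval (x + 1) := by
  have h := congrArg (eval x) (ascPochhammer_succ_comp_X_add_one S n)
  simp only [eval_comp, eval_add, eval_X, eval_one, nsmul_eq_mul, eval_mul, eval_natCast,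
    Nat.cast_succ] at h
  rw [h, add_sub_cancel_left]

theorem mul_sum_range_ascPochhammer_eval (n m : ℕ) (x : S) :
    (n + 1) * ∑ i ∈ range m, (ascPochhammer S n).eval (x + i + 1)
      = (ascPochhammer S (n + 1)).eval (x + m) - (ascPochhammer S (n + 1)).eval x := by
  rw [mul_sum]
  simp_rw [← ascPochhammer_succ_eval_add_one_sub]
  simpa [add_assoc] using sum_range_sub (fun i ↦ (ascPochhammer S (n + 1)).eval (x + i)) m

theorem mul_sum_range_ascPochhammer_eval_one_add (n m : ℕ) :
    (n + 1) * ∑ i ∈ range m, (ascPochhammer S n).eval (1 + (i : S))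
      = m * (ascPochhammer S n).eval ((m : S) + 1) := by
  simpa [add_comm (1 : S), ascPochhammer_succ_eval_left] using
    mul_sum_range_ascPochhammer_eval n m (0 : S)

end Pochhammer

theorem ordinaryHypergeometricSeries_radius_ge_one {𝕂 𝔸 : Type*} [RCLike 𝕂]
    [NormedDivisionRing 𝔸] [NormedAlgebra 𝕂 𝔸] (a b c : 𝕂) (hc : ∀ k : ℕ, (k : 𝕂) ≠ -c) :
    1 ≤ (ordinaryHypergeometricSeries 𝔸 a b c).radius := by
  by_cases ha : ∃ k : ℕ, a = -k
  · obtain ⟨k, rfl⟩ := ha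
    simp [ordinaryHypergeometric_radius_top_of_neg_nat₁]
  by_cases hb : ∃ k : ℕ, b = -k
  · obtain ⟨k, rfl⟩ := hb
    simp [ordinaryHypergeometric_radius_top_of_neg_nat₂]
  push Not at ha hb
  rw [ordinaryHypergeometricSeries_radius_eq_one]
  intro k
  exact ⟨fun h ↦ ha k (neg_eq_iff_eq_neg.mp h.symm), fun h ↦ hb k (neg_eq_iff_eq_neg.mp h.symm),
    hc k⟩

theorem hasSum_hyperF {a b c z : ℂ} (hc : ∀ k : ℕ, (k : ℂ) ≠ -c) (hz : ‖z‖ < 1) :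
    HasSum (fun n : ℕ ↦ (ascPochhammer ℂ n).eval a * (ascPochhammer ℂ n).eval b /
      ((n ! : ℂ) * (ascPochhammer ℂ n).eval c) * z ^ n) (hyperF a b c z) := by
  refine Summable.hasSum ?_
  have hz' : z ∈ Metric.eball 0 (ordinaryHypergeometricSeries ℂ a b c).radius :=
    mem_eball_zero_iff.mpr <| lt_of_lt_of_le (by rwa [← ofReal_norm, ENNReal.ofReal_lt_one])
      (ordinaryHypergeometricSeries_radius_ge_one a b c hc)
  refine ((ordinaryHypergeometricSeries ℂ a b c).summable hz').congr fun n ↦ ?_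
  rw [ordinaryHypergeometricSeries_apply_eq, smul_eq_mul]
  ring

theorem hasSum_one_sub_cpow {s z : ℂ} (hz : ‖z‖ < 1) :
    HasSum (fun n : ℕ ↦ (ascPochhammer ℂ n).eval (-s) / n ! * z ^ n) ((1 - z) ^ s) := by
  have h := (Complex.one_add_cpow_hasFPowerSeriesOnBall_zero (a := s)).hasSum (y := -z)
    (by rwa [mem_eball_zero_iff, ← ofReal_norm, ENNReal.ofReal_lt_one, norm_neg])
  rw [zero_add, ← sub_eq_add_neg,
    binomialSeries_eq_ordinaryHypergeometricSeries (b := 1) (by norm_cast; simp)] at h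
  refine h.congr_fun fun n ↦ ?_
  have h1 : (ascPochhammer ℂ n).eval 1 ≠ 0 := by
    rw [ascPochhammer_eval_one]; exact_mod_cast n.factorial_ne_zero
  have hneg : (⇑(-ContinuousLinearMap.id ℂ ℂ) ∘ fun _ : Fin n ↦ -z) = fun _ ↦ z := by
    ext; simp
  rw [FormalMultilinearSeries.compContinuousLinearMap_apply, hneg,
    ordinaryHypergeometricSeries_apply_eq, smul_eq_mul]
  field_simp

theorem natCast_ne_neg_natCast_add_two (k r : ℕ) : (k : ℂ) ≠ -((r : ℂ) + 2) := by
  intro h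
  have : ((k + r + 2 : ℕ) : ℂ) = 0 := by push_cast; linear_combination h
  exact absurd (Nat.cast_eq_zero.mp this) (by omega)

theorem sum_range_mul_hyperF_term_eq (r n : ℕ) {s : ℂ} (hs : s ≠ 0) (z : ℂ) :
    ∑ i ∈ range (r + 1), z * ((ascPochhammer ℂ n).eval (1 + (i : ℂ)) *
        (ascPochhammer ℂ n).eval (1 - s) / ((n ! : ℂ) * (ascPochhammer ℂ n).eval ((r : ℂ) + 2)) *
        z ^ n)
      = ((r : ℂ) + 1) / (-s) * ((ascPochhammer ℂ (n + 1)).eval (-s) / ((n + 1)! : ℂ) *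
        z ^ (n + 1)) := by
  have hc : (ascPochhammer ℂ n).eval ((r : ℂ) + 2) ≠ 0 := fun h ↦ by
    obtain ⟨k, -, hk⟩ := (ascPochhammer_eval_eq_zero_iff n _).1 h
    exact natCast_ne_neg_natCast_add_two k r hk
  have hsum : ∑ i ∈ range (r + 1), (ascPochhammer ℂ n).eval (1 + (i : ℂ))
      = ((r : ℂ) + 1) * (ascPochhammer ℂ n).eval ((r : ℂ) + 2) / ((n : ℂ) + 1) := by
    rw [eq_div_iff (Nat.cast_add_one_ne_zero n), mul_comm, mul_sum_range_ascPochhammer_eval_one_add]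
    push_cast
    ring_nf
  calc _ = (∑ i ∈ range (r + 1), (ascPochhammer ℂ n).eval (1 + (i : ℂ))) *
        (z * (ascPochhammer ℂ n).eval (1 - s) /
          ((n ! : ℂ) * (ascPochhammer ℂ n).eval ((r : ℂ) + 2)) * z ^ n) := by
        rw [sum_mul]
        exact sum_congr rfl fun i _ ↦ by ring
    _ = _ := by
        rw [hsum, ascPochhammer_succ_eval_left, Nat.factorial_succ, neg_add_eq_sub]
        push_cast
        field_simp
        ring

/-- The telescoping identity from case (C1, III): for `s ≠ 0` and `|z| < 1`,
`∑_{i=0}^{r} z F(1+i, 1−s, r+2, z) = ((r+1)/(−s)) ((1−z)^s − 1)`,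
where `(1−z)^s` is the principal complex power. -/
theorem stmt_19 (r : ℕ) (s z : ℂ) (hs : s ≠ 0) (hz : ‖z‖ < 1) :
    ∑ i ∈ Finset.range (r + 1), z * hyperF (1 + i) (1 - s) ((r : ℂ) + 2) z
      = ((r : ℂ) + 1) / (-s) * ((1 - z) ^ s - 1) := by
  have hlhs := hasSum_sum fun i (_ : i ∈ range (r + 1)) ↦
    (hasSum_hyperF (a := 1 + i) (b := 1 - s) (natCast_ne_neg_natCast_add_two · r) hz).mul_left z
  have hrhs := ((hasSum_nat_add_iff' 1).mpr (hasSum_one_sub_cpow (s := s) hz)).mul_left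
    (((r : ℂ) + 1) / (-s))
  simp only [range_one, sum_singleton, ascPochhammer_zero, eval_one, factorial_zero, cast_one,
    pow_zero, div_one, mul_one] at hrhs
  exact hlhs.unique (hrhs.congr_fun fun n ↦ sum_range_mul_hyperF_term_eq r n hs z)
end
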